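/- arXiv:math/0412263 — 3 statements merged into one kernel-verified Lean document; each statement's English description precedes it below -/
import Mathlib

section
/- Let H be an infinite connected graph of bounded degree that contains no bi-infinite simple path, and let x be a vertex of H. Then there are infinitely many vertices v such that the connected component of x in H \ {v} (the graph obtained by deleting v and all edges incident to it) is finite. -/
open SimpleGraph

/-- The set of edges of `G` whose endpoints cannot be joined by a path all of whose
edges have strictly smaller label: the (free) minimal spanning forest / tree of `G`. -/
def mstEdges {V α : Type*} [LinearOrder α] (G : SimpleGraph V) (U : Sym2 V → α) :
    Set (Sym2 V) :=
  {e | e ∈ G.edgeSet ∧ ∀ a b : V, e = s(a, b) →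
    ∀ p : G.Walk a b, p.IsPath → ∃ f ∈ p.edges, U e ≤ U f}

/-- A one-sided infinite simple path in `G`. -/
def IsRay {V : Type*} (G : SimpleGraph V) (r : ℕ → V) : Prop :=
  Function.Injective r ∧ ∀ n : ℕ, G.Adj (r n) (r (n + 1))

/-- The edges of a one-sided infinite path. -/
def rayEdges {V : Type*} (r : ℕ → V) : Set (Sym2 V) :=
  Set.range fun n : ℕ => s(r n, r (n + 1))

/-- The wired minimal spanning forest of `G`: edges such that every extended path
(finite simple path, or pair of disjoint rays from the two endpoints) joining the
endpoints contains an edge of label at least as large. -/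
def wmsfEdges {V : Type*} (G : SimpleGraph V) (U : Sym2 V → ℝ) : Set (Sym2 V) :=
  {e | e ∈ G.edgeSet ∧ ∀ a b : V, e = s(a, b) →
    (∀ p : G.Walk a b, p.IsPath → ∃ f ∈ p.edges, U e ≤ U f) ∧
    (∀ r₁ r₂ : ℕ → V, IsRay G r₁ → IsRay G r₂ → r₁ 0 = a → r₂ 0 = b →
      (∀ m n : ℕ, r₁ m ≠ r₂ n) →
      ∃ f ∈ rayEdges r₁ ∪ rayEdges r₂, U e ≤ U f)}

/-- The edges of `G` joining `W` to its complement. -/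
def cutEdges {V : Type*} (G : SimpleGraph V) (W : Set V) : Set (Sym2 V) :=
  {e | e ∈ G.edgeSet ∧ ∃ a b : V, e = s(a, b) ∧ a ∈ W ∧ b ∉ W}

/-- A bi-infinite simple path in `G`. -/
def IsBiRay {V : Type*} (G : SimpleGraph V) (r : ℤ → V) : Prop :=
  Function.Injective r ∧ ∀ n : ℤ, G.Adj (r n) (r (n + 1))

/-- The edges of a bi-infinite simple path. -/
def biRayEdges {V : Type*} (r : ℤ → V) : Set (Sym2 V) :=
  Set.range fun n : ℤ => s(r n, r (n + 1))

/-- The graph `H` with the vertex `v` deleted (as a graph on the same vertex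
type: `v` is isolated, and all edges incident to `v` are removed). -/
def delVertex {V : Type*} (H : SimpleGraph V) (v : V) : SimpleGraph V where
  Adj a b := H.Adj a b ∧ a ≠ v ∧ b ≠ v
  symm := ⟨fun a b h => ⟨h.1.symm, h.2.2, h.2.1⟩⟩
  loopless := ⟨fun a h => H.irrefl h.1⟩

namespace Stmt15

/-- Intersection of a decreasing chain of nonempty subsets of a finite set is nonempty. -/
lemma chain_inter {β : Type*} (A : ℕ → Set β) (hdec : ∀ m, A (m+1) ⊆ A m)
    (hne : ∀ m, (A m).Nonempty) (hfin : (A 0).Finite) : (⋂ m, A m).Nonempty := by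
  have hdec' : ∀ m m', m ≤ m' → A m' ⊆ A m := by
    intro m m' h
    induction h with
    | refl => exact subset_rfl
    | step _ ih => exact (hdec _).trans ih
  have hfinm : ∀ m, (A m).Finite := fun m => hfin.subset (hdec' 0 m (Nat.zero_le m))
  have hns : {n | ∃ m, (A m).ncard = n}.Nonempty := ⟨(A 0).ncard, 0, rfl⟩
  obtain ⟨m₀, hm₀⟩ : ∃ m₀, (A m₀).ncard = sInf {n | ∃ m, (A m).ncard = n} :=
    Nat.sInf_mem hns
  have hmin : ∀ m, (A m₀).ncard ≤ (A m).ncard := by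
    intro m; rw [hm₀]; exact Nat.sInf_le ⟨m, rfl⟩
  have heq : ∀ m, m₀ ≤ m → A m = A m₀ := by
    intro m h
    exact Set.eq_of_subset_of_ncard_le (hdec' m₀ m h) (hmin m) (hfinm m₀)
  have hsub : A m₀ ⊆ ⋂ m, A m := by
    intro z hz
    refine Set.mem_iInter.2 fun m => ?_
    rcases le_or_gt m₀ m with h | h
    · rw [heq m h]; exact hz
    · exact hdec' m m₀ h.le hz
  exact (hne m₀).mono hsub

/-- König's lemma for "prefix-determined" sets of sequences. -/
lemma koenig {α : Type*} (T : ℕ → Set (ℕ → α))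
    (hdet : ∀ k f g, f ∈ T k → (∀ i ≤ k, g i = f i) → g ∈ T k)
    (hmono : ∀ k, T (k+1) ⊆ T k)
    (hne : ∀ k, (T k).Nonempty)
    (hfin : ∀ k, ((fun f (i : Fin (k+1)) => f i) '' T k).Finite) :
    ∃ f, ∀ k, f ∈ T k := by
  classical
  set R : ∀ k, (ℕ → α) → (Fin (k+1) → α) := fun k f i => f i with hR
  have hTle : ∀ k k', k ≤ k' → T k' ⊆ T k := by
    intro k k' h
    induction h with
    | refl => exact subset_rfl
    | step _ ih => exact (hmono _).trans ih
  set A : ∀ k, ℕ → Set (Fin (k+1) → α) := fun k m => R k '' T (k+m) with hA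
  have hAdec : ∀ k m, A k (m+1) ⊆ A k m := by
    intro k m
    exact Set.image_mono (hTle (k+m) (k+m+1) (Nat.le_succ _))
  have hAne : ∀ k m, (A k m).Nonempty := by
    intro k m; exact (hne (k+m)).image _
  have hAfin : ∀ k, (A k 0).Finite := by
    intro k; exact hfin k
  set Good : ∀ k, Set (Fin (k+1) → α) := fun k => ⋂ m, A k m with hGood
  have hGoodne : ∀ k, (Good k).Nonempty := fun k =>
    chain_inter (A k) (hAdec k) (hAne k) (hAfin k)
  -- the step lemma
  have step : ∀ k (u : Fin (k+1) → α), u ∈ Good k →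
      ∃ u' : Fin (k+2) → α, u' ∈ Good (k+1) ∧ ∀ i : Fin (k+1), u' i.castSucc = u i := by
    intro k u hu
    set B : ℕ → Set (Fin (k+2) → α) :=
      fun m => {w ∈ A (k+1) m | ∀ i : Fin (k+1), w i.castSucc = u i} with hB
    have hBdec : ∀ m, B (m+1) ⊆ B m := fun m w hw => ⟨hAdec (k+1) m hw.1, hw.2⟩
    have hBne : ∀ m, (B m).Nonempty := by
      intro m
      have hu' : u ∈ A k (m+1) := Set.mem_iInter.1 hu (m+1)
      obtain ⟨f, hf, hfu⟩ := hu'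
      have hf' : f ∈ T (k+1+m) := by
        have : k + (m+1) = k + 1 + m := by omega
        rwa [this] at hf
      refine ⟨R (k+1) f, ⟨⟨f, hf', rfl⟩, ?_⟩⟩
      intro i
      have : (R k f) i = u i := by rw [hfu]
      simpa [hR] using this
    have hBfin : (B 0).Finite := (hAfin (k+1)).subset fun w hw => hw.1
    obtain ⟨u', hu'⟩ := chain_inter B hBdec hBne hBfin
    refine ⟨u', ?_, (Set.mem_iInter.1 hu' 0).2⟩
    exact Set.mem_iInter.2 fun m => (Set.mem_iInter.1 hu' m).1
  -- build the chain by recursion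
  let stepaux : ∀ k, {u : Fin (k+1) → α // u ∈ Good k} → {u : Fin (k+2) → α // u ∈ Good (k+1)} :=
    fun k p => ⟨Classical.choose (step k p.1 p.2), (Classical.choose_spec (step k p.1 p.2)).1⟩
  let U : ∀ k, {u : Fin (k+1) → α // u ∈ Good k} :=
    fun k => Nat.rec ⟨(hGoodne 0).some, (hGoodne 0).some_mem⟩ stepaux k
  have hUstep : ∀ k (i : Fin (k+1)), (U (k+1)).1 i.castSucc = (U k).1 i := by
    intro k i
    exact (Classical.choose_spec (step k (U k).1 (U k).2)).2 i
  set f : ℕ → α := fun n => (U n).1 ⟨n, n.lt_succ_self⟩ with hf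
  have hagree : ∀ k i (h : i ≤ k), (U k).1 ⟨i, by omega⟩ = f i := by
    intro k
    induction k with
    | zero => intro i h; interval_cases i; rfl
    | succ k ih =>
      intro i h
      rcases Nat.eq_or_lt_of_le h with h1 | h1
      · subst h1; rfl
      · have h2 : i ≤ k := by omega
        have : ((⟨i, by omega⟩ : Fin (k+1)).castSucc) = (⟨i, by omega⟩ : Fin (k+2)) := rfl
        rw [← ih i h2, ← hUstep k ⟨i, by omega⟩]
        exact congrArg _ this.symm
  refine ⟨f, fun k => ?_⟩
  have : (U k).1 ∈ A k 0 := Set.mem_iInter.1 (U k).2 0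
  obtain ⟨g, hg, hgu⟩ := this
  refine hdet k g f hg fun i hi => ?_
  have := hagree k i hi
  rw [← this, ← hgu]

open SimpleGraph

variable {V : Type*}

/-- Vertices reachable from `x` by a walk of length at most `k`. -/
def reach (G : SimpleGraph V) (x : V) (k : ℕ) : Set V :=
  {z | ∃ L ≤ k, ∃ f : ℕ → V, f 0 = x ∧ f L = z ∧ ∀ i < L, G.Adj (f i) (f (i+1))}

lemma reach_mono (G : SimpleGraph V) (x : V) {k k' : ℕ} (h : k ≤ k') :
    reach G x k ⊆ reach G x k' := by
  rintro z ⟨L, hL, f, h1, h2, h3⟩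
  exact ⟨L, hL.trans h, f, h1, h2, h3⟩

lemma reach_finite (G : SimpleGraph V) (hlf : ∀ v : V, (G.neighborSet v).Finite)
    (x : V) : ∀ k, (reach G x k).Finite := by
  intro k
  induction k with
  | zero =>
    refine (Set.finite_singleton x).subset ?_
    rintro z ⟨L, hL, f, h1, h2, _⟩
    interval_cases L
    rw [Set.mem_singleton_iff, ← h2]
    exact h1
  | succ k ih =>
    refine (ih.union ((ih.biUnion (fun v _ => hlf v)))).subset ?_
    rintro z ⟨L, hL, f, h1, h2, h3⟩
    rcases Nat.eq_or_lt_of_le hL with h | h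
    · subst h
      right
      refine Set.mem_biUnion
        (show f k ∈ reach G x k from ⟨k, le_refl k, f, h1, rfl, fun i hi => h3 i (by omega)⟩) ?_
      have := h3 k (by omega)
      rw [h2] at this
      exact this
    · left; exact ⟨L, by omega, f, h1, h2, h3⟩

lemma walk_chain (G : SimpleGraph V) {u v : V} (w : G.Walk u v) :
    ∃ L, ∃ f : ℕ → V, f 0 = u ∧ f L = v ∧ ∀ i < L, G.Adj (f i) (f (i+1)) := by
  induction w with
  | nil => exact ⟨0, fun _ => _, rfl, rfl, by omega⟩
  | @cons a b c h p ih =>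
    obtain ⟨L, f, h1, h2, h3⟩ := ih
    refine ⟨L+1, fun i => if i = 0 then a else f (i-1), if_pos rfl, ?_, ?_⟩
    · simp only [Nat.add_sub_cancel, if_neg (Nat.succ_ne_zero L)]
      exact h2
    · intro i hi
      rcases Nat.eq_zero_or_pos i with h0 | h0
      · subst h0
        simpa [h1] using h
      · have hne : i ≠ 0 := by omega
        have heq : i - 1 + 1 = i := by omega
        simp only [if_neg hne, if_neg (by omega : i + 1 ≠ 0)]
        have := h3 (i-1) (by omega)
        rw [heq] at this
        exact this

lemma mem_reach_of_reachable (G : SimpleGraph V) {x z : V} (h : G.Reachable x z) :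
    ∃ k, z ∈ reach G x k := by
  obtain ⟨w⟩ := h
  obtain ⟨L, f, h1, h2, h3⟩ := walk_chain G w
  exact ⟨L, L, le_rfl, f, h1, h2, h3⟩

lemma reachable_of_chain (G : SimpleGraph V) (f : ℕ → V) {L : ℕ}
    (h3 : ∀ i < L, G.Adj (f i) (f (i+1))) : G.Reachable (f 0) (f L) := by
  induction L with
  | zero => exact Reachable.refl _
  | succ L ih =>
    exact (ih (fun i hi => h3 i (by omega))).trans (h3 L (by omega)).reachable

/-- From a reachable vertex outside `reach G x k`, get a self-avoiding chain of
length `k` starting at `x`. -/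
lemma exists_injective_chain (G : SimpleGraph V) {x z : V} (h : G.Reachable x z)
    (k : ℕ) (hz : z ∉ reach G x k) :
    ∃ f : ℕ → V, f 0 = x ∧ (∀ i < k, G.Adj (f i) (f (i+1))) ∧
      (∀ p ≤ k, ∀ q ≤ k, f p = f q → p = q) := by
  classical
  have hex : ∃ L, ∃ f : ℕ → V, f 0 = x ∧ f L = z ∧ ∀ i < L, G.Adj (f i) (f (i+1)) := by
    obtain ⟨w⟩ := h; exact walk_chain G w
  -- minimal length of a chain from x to z
  have hex' : ∃ L, (∃ f : ℕ → V, f 0 = x ∧ f L = z ∧ ∀ i < L, G.Adj (f i) (f (i+1))) := hex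
  let L₀ := Nat.find hex'
  obtain ⟨f, h1, h2, h3⟩ : ∃ f : ℕ → V, f 0 = x ∧ f L₀ = z ∧ ∀ i < L₀, G.Adj (f i) (f (i+1)) :=
    Nat.find_spec hex'
  have hLk : k < L₀ := by
    by_contra hc
    push_neg at hc
    exact hz ⟨L₀, hc, f, h1, h2, h3⟩
  have hinj : ∀ p ≤ L₀, ∀ q ≤ L₀, f p = f q → p = q := by
    intro p hp q hq hpq
    by_contra hne
    -- wlog p < q, splice out
    rcases Nat.lt_or_ge p q with hlt | hge
    · have : ∃ g : ℕ → V, g 0 = x ∧ g (L₀ - (q - p)) = z ∧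
          ∀ i < L₀ - (q - p), G.Adj (g i) (g (i+1)) := by
        refine ⟨fun i => if i ≤ p then f i else f (i + (q - p)), by simp [h1, Nat.zero_le], ?_, ?_⟩
        · dsimp only
          by_cases hcc : L₀ - (q - p) ≤ p
          · -- then q = L₀ and p = L₀ - (q-p)
            have hpe : L₀ - (q - p) = p := by omega
            rw [if_pos hcc, hpe, hpq]
            have : q = L₀ := by omega
            rw [← this] at h2
            exact h2
          · rw [if_neg hcc]
            have : L₀ - (q - p) + (q - p) = L₀ := by omega
            rw [this]
            exact h2
        · intro i hi
          dsimp only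
          by_cases hip : i ≤ p
          · rcases Nat.eq_or_lt_of_le hip with he | hl
            · rw [if_pos hip, if_neg (by omega : ¬ i + 1 ≤ p), he, hpq]
              have hee : p + 1 + (q - p) = q + 1 := by omega
              rw [hee]
              exact h3 q (by omega)
            · rw [if_pos hip, if_pos (by omega : i + 1 ≤ p)]
              exact h3 i (by omega)
          · rw [if_neg hip, if_neg (by omega : ¬ i + 1 ≤ p)]
            have : i + (q - p) + 1 = i + 1 + (q - p) := by omega
            rw [← this]
            exact h3 (i + (q - p)) (by omega)
      have hle : Nat.find hex' ≤ L₀ - (q - p) := Nat.find_le this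
      omega
    · have hlt : q < p := by omega
      have : ∃ g : ℕ → V, g 0 = x ∧ g (L₀ - (p - q)) = z ∧
          ∀ i < L₀ - (p - q), G.Adj (g i) (g (i+1)) := by
        refine ⟨fun i => if i ≤ q then f i else f (i + (p - q)), by simp [h1, Nat.zero_le], ?_, ?_⟩
        · dsimp only
          by_cases hcc : L₀ - (p - q) ≤ q
          · have hpe : L₀ - (p - q) = q := by omega
            rw [if_pos hcc, hpe, ← hpq]
            have : p = L₀ := by omega
            rw [← this] at h2
            exact h2
          · rw [if_neg hcc]
            have : L₀ - (p - q) + (p - q) = L₀ := by omega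
            rw [this]
            exact h2
        · intro i hi
          dsimp only
          by_cases hip : i ≤ q
          · rcases Nat.eq_or_lt_of_le hip with he | hl
            · rw [if_pos hip, if_neg (by omega : ¬ i + 1 ≤ q), he, ← hpq]
              have hee : q + 1 + (p - q) = p + 1 := by omega
              rw [hee]
              exact h3 p (by omega)
            · rw [if_pos hip, if_pos (by omega : i + 1 ≤ q)]
              exact h3 i (by omega)
          · rw [if_neg hip, if_neg (by omega : ¬ i + 1 ≤ q)]
            have : i + (p - q) + 1 = i + 1 + (p - q) := by omega
            rw [← this]
            exact h3 (i + (p - q)) (by omega)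
      have hle : Nat.find hex' ≤ L₀ - (p - q) := Nat.find_le this
      omega
  exact ⟨f, h1, fun i hi => h3 i (by omega), fun p hp q hq => hinj p (by omega) q (by omega)⟩

lemma exists_ray (G : SimpleGraph V) (hlf : ∀ v : V, (G.neighborSet v).Finite) (x : V)
    (hinf : {z | G.Reachable x z}.Infinite) :
    ∃ f : ℕ → V, f 0 = x ∧ Function.Injective f ∧ ∀ n, G.Adj (f n) (f (n+1)) := by
  classical
  set T : ℕ → Set (ℕ → V) := fun k =>
    {f | f 0 = x ∧ (∀ i < k, G.Adj (f i) (f (i+1))) ∧ ∀ p ≤ k, ∀ q ≤ k, f p = f q → p = q}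
    with hT
  have hmem : ∀ k f, f ∈ T k → ∀ i ≤ k, f i ∈ reach G x k := by
    intro k f hf i hi
    exact ⟨i, hi, f, hf.1, rfl, fun j hj => hf.2.1 j (by omega)⟩
  obtain ⟨f, hfT⟩ := koenig T
    (by
      intro k f g hf hg
      refine ⟨by rw [hg 0 (by omega)]; exact hf.1, fun i hi => ?_, fun p hp q hq h => ?_⟩
      · rw [hg i (by omega), hg (i+1) (by omega)]; exact hf.2.1 i hi
      · exact hf.2.2 p hp q hq (by rwa [hg p hp, hg q hq] at h))
    (by
      intro k f hf
      exact ⟨hf.1, fun i hi => hf.2.1 i (by omega), fun p hp q hq h =>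
        hf.2.2 p (by omega) q (by omega) h⟩)
    (by
      intro k
      obtain ⟨z, hz⟩ := (hinf.diff (reach_finite G hlf x k)).nonempty
      obtain ⟨f, h1, h2, h3⟩ := exists_injective_chain G hz.1 k hz.2
      exact ⟨f, h1, h2, h3⟩)
    (by
      intro k
      refine (Set.Finite.pi (fun _ : Fin (k+1) => reach_finite G hlf x k)).subset ?_
      rintro u ⟨f, hf, rfl⟩
      simp only [Set.mem_pi, Set.mem_univ, forall_true_left]
      intro i
      exact hmem k f hf i (Nat.lt_succ_iff.mp i.2))
  refine ⟨f, (hfT 0).1, fun a b h => ?_, fun n => (hfT (n+1)).2.1 n (by omega)⟩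
  exact (hfT (max a b)).2.2 a (le_max_left a b) b (le_max_right a b) h

lemma biray_of_two_rays (H : SimpleGraph V) (σ₁ σ₂ : ℕ → V)
    (h0 : σ₁ 0 = σ₂ 0)
    (hinj1 : Function.Injective σ₁) (hinj2 : Function.Injective σ₂)
    (hadj1 : ∀ n, H.Adj (σ₁ n) (σ₁ (n+1))) (hadj2 : ∀ n, H.Adj (σ₂ n) (σ₂ (n+1)))
    (hcross : ∀ i j, σ₁ i = σ₂ j → i = 0 ∧ j = 0) :
    ∃ r : ℤ → V, Function.Injective r ∧ ∀ n : ℤ, H.Adj (r n) (r (n+1)) := by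
  classical
  refine ⟨fun z => if 0 ≤ z then σ₁ z.toNat else σ₂ (-z).toNat, ?_, ?_⟩
  · intro a b h
    dsimp only at h
    by_cases ha : 0 ≤ a <;> by_cases hb : 0 ≤ b
    · rw [if_pos ha, if_pos hb] at h
      have := hinj1 h; omega
    · rw [if_pos ha, if_neg hb] at h
      have := hcross _ _ h; omega
    · rw [if_neg ha, if_pos hb] at h
      have := hcross _ _ h.symm; omega
    · rw [if_neg ha, if_neg hb] at h
      have := hinj2 h; omega
  · intro n
    dsimp only
    by_cases hn : 0 ≤ n
    · rw [if_pos hn, if_pos (by omega : (0:ℤ) ≤ n + 1)]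
      have : (n+1).toNat = n.toNat + 1 := by omega
      rw [this]
      exact hadj1 _
    · rw [if_neg hn]
      by_cases hn1 : n = -1
      · subst hn1
        rw [if_pos (by omega : (0:ℤ) ≤ (-1:ℤ) + 1)]
        have e1 : ((-(-1:ℤ)).toNat) = 1 := by omega
        have e2 : (((-1:ℤ)+1).toNat) = 0 := by omega
        rw [e1, e2, h0]
        exact (hadj2 0).symm
      · rw [if_neg (by omega : ¬ (0:ℤ) ≤ n + 1)]
        have : (-n).toNat = (-(n+1)).toNat + 1 := by omega
        rw [this]
        exact (hadj2 _).symm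

lemma no_pair_fan (H : SimpleGraph V) (hlf : ∀ v : V, (H.neighborSet v).Finite)
    (hnopath : ¬ ∃ r : ℤ → V, Function.Injective r ∧ ∀ n : ℤ, H.Adj (r n) (r (n+1)))
    (w : V)
    (hfan : ∀ k : ℕ, ∃ f g : ℕ → V, f 0 = w ∧ g 0 = w ∧
      (∀ i < k, H.Adj (f i) (f (i+1))) ∧ (∀ i < k, H.Adj (g i) (g (i+1))) ∧
      (∀ p ≤ k, ∀ q ≤ k, f p = f q → p = q) ∧
      (∀ p ≤ k, ∀ q ≤ k, g p = g q → p = q) ∧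
      (∀ p ≤ k, ∀ q ≤ k, f p = g q → p = 0 ∧ q = 0)) : False := by
  classical
  set T : ℕ → Set (ℕ → V × V) := fun k =>
    {F | (F 0).1 = w ∧ (F 0).2 = w ∧
      (∀ i < k, H.Adj (F i).1 (F (i+1)).1) ∧ (∀ i < k, H.Adj (F i).2 (F (i+1)).2) ∧
      (∀ p ≤ k, ∀ q ≤ k, (F p).1 = (F q).1 → p = q) ∧
      (∀ p ≤ k, ∀ q ≤ k, (F p).2 = (F q).2 → p = q) ∧
      (∀ p ≤ k, ∀ q ≤ k, (F p).1 = (F q).2 → p = 0 ∧ q = 0)} with hT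
  have hmem : ∀ k F, F ∈ T k → ∀ i ≤ k,
      (F i).1 ∈ reach H w k ∧ (F i).2 ∈ reach H w k := by
    intro k F hF i hi
    constructor
    · exact ⟨i, hi, fun j => (F j).1, hF.1, rfl, fun j hj => hF.2.2.1 j (by omega)⟩
    · exact ⟨i, hi, fun j => (F j).2, hF.2.1, rfl, fun j hj => hF.2.2.2.1 j (by omega)⟩
  obtain ⟨F, hFT⟩ := koenig T
    (by
      intro k F G hF hG
      refine ⟨by rw [hG 0 (by omega)]; exact hF.1, by rw [hG 0 (by omega)]; exact hF.2.1,
        fun i hi => ?_, fun i hi => ?_, fun p hp q hq h => ?_, fun p hp q hq h => ?_,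
        fun p hp q hq h => ?_⟩
      · rw [hG i (by omega), hG (i+1) (by omega)]; exact hF.2.2.1 i hi
      · rw [hG i (by omega), hG (i+1) (by omega)]; exact hF.2.2.2.1 i hi
      · exact hF.2.2.2.2.1 p hp q hq (by rwa [hG p hp, hG q hq] at h)
      · exact hF.2.2.2.2.2.1 p hp q hq (by rwa [hG p hp, hG q hq] at h)
      · exact hF.2.2.2.2.2.2 p hp q hq (by rwa [hG p hp, hG q hq] at h))
    (by
      intro k F hF
      exact ⟨hF.1, hF.2.1, fun i hi => hF.2.2.1 i (by omega),
        fun i hi => hF.2.2.2.1 i (by omega),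
        fun p hp q hq => hF.2.2.2.2.1 p (by omega) q (by omega),
        fun p hp q hq => hF.2.2.2.2.2.1 p (by omega) q (by omega),
        fun p hp q hq => hF.2.2.2.2.2.2 p (by omega) q (by omega)⟩)
    (by
      intro k
      obtain ⟨f, g, h1, h2, h3, h4, h5, h6, h7⟩ := hfan k
      exact ⟨fun i => (f i, g i), h1, h2, h3, h4, h5, h6, h7⟩)
    (by
      intro k
      refine (Set.Finite.pi (fun _ : Fin (k+1) =>
        (reach_finite H hlf w k).prod (reach_finite H hlf w k))).subset ?_
      rintro u ⟨F, hF, rfl⟩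
      simp only [Set.mem_pi, Set.mem_univ, forall_true_left]
      intro i
      obtain ⟨m1, m2⟩ := hmem k F hF i (Nat.lt_succ_iff.mp i.2)
      exact Set.mem_prod.2 ⟨m1, m2⟩)
  refine hnopath (biray_of_two_rays H (fun n => (F n).1) (fun n => (F n).2) ?_ ?_ ?_ ?_ ?_ ?_)
  · show (F 0).1 = (F 0).2
    rw [(hFT 0).1, (hFT 0).2.1]
  · intro a b h
    exact (hFT (max a b)).2.2.2.2.1 a (le_max_left a b) b (le_max_right a b) h
  · intro a b h
    exact (hFT (max a b)).2.2.2.2.2.1 a (le_max_left a b) b (le_max_right a b) h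
  · intro n; exact (hFT (n+1)).2.2.1 n (by omega)
  · intro n; exact (hFT (n+1)).2.2.2.1 n (by omega)
  · intro i j h
    exact (hFT (max i j)).2.2.2.2.2.2 i (le_max_left i j) j (le_max_right i j) h

/-- Witness data for a "bridge" over the ray `r`: a self-avoiding chain from `r j` to
`r m` whose interior avoids `r` entirely. -/
structure BW (H : SimpleGraph V) (r : ℕ → V) (j m : ℕ) where
  L : ℕ
  g : ℕ → V
  hL : 1 ≤ L
  h0 : g 0 = r j
  hLv : g L = r m
  hadj : ∀ i < L, H.Adj (g i) (g (i+1))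
  hinj : ∀ p ≤ L, ∀ q ≤ L, g p = g q → p = q
  hoff : ∀ i, 0 < i → i < L → ∀ c, g i ≠ r c

def IsBridge (H : SimpleGraph V) (r : ℕ → V) (j m : ℕ) : Prop :=
  j < m ∧ Nonempty (BW H r j m)

/-- Merging two bridges that share an interior vertex. -/
lemma bridge_merge {H : SimpleGraph V} {r : ℕ → V} (hr_inj : Function.Injective r)
    {j m j' m' : ℕ} (hjm' : j < m') (B : BW H r j m) (B' : BW H r j' m')
    (hsh : ∃ p q, 0 < p ∧ p < B.L ∧ 0 < q ∧ q < B'.L ∧ B.g p = B'.g q) :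
    IsBridge H r j m' := by
  classical
  obtain ⟨p₀, q₀, hp₀, hpL₀, hq₀, hqL₀, hpq₀⟩ := hsh
  set P : ℕ → Prop := fun q => ∃ p, 0 < p ∧ p < B.L ∧ B'.g q = B.g p with hP
  set b := Nat.findGreatest P B'.L with hb
  have hPb : P b := Nat.findGreatest_spec (le_of_lt hqL₀) ⟨p₀, hp₀, hpL₀, hpq₀.symm⟩
  obtain ⟨ps, hps, hpsL, hpsv⟩ := hPb
  have hbmax : ∀ q ≤ B'.L, P q → q ≤ b := fun q hq hPq => Nat.le_findGreatest hq hPq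
  have hb0 : 0 < b := by
    rcases Nat.eq_zero_or_pos b with h | h
    · exfalso
      rw [h] at hpsv
      exact B.hoff ps hps hpsL j' (by rw [← hpsv, B'.h0])
    · exact h
  have hbL : b < B'.L := by
    rcases Nat.lt_or_ge b B'.L with h | h
    · exact h
    · exfalso
      have hbe : b = B'.L := le_antisymm (Nat.findGreatest_le _) h
      rw [hbe] at hpsv
      rw [B'.hLv] at hpsv
      exact B.hoff ps hps hpsL m' hpsv.symm
  refine ⟨hjm', ⟨⟨ps + (B'.L - b), fun t => if t ≤ ps then B.g t else B'.g (b + (t - ps)),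
    by omega, by rw [if_pos (Nat.zero_le ps)]; exact B.h0, ?_, ?_, ?_, ?_⟩⟩⟩
  · rw [if_neg (by omega)]
    have : b + (ps + (B'.L - b) - ps) = B'.L := by omega
    rw [this]
    exact B'.hLv
  · intro i hi
    by_cases h1 : i + 1 ≤ ps
    · rw [if_pos (by omega), if_pos h1]
      exact B.hadj i (by omega)
    · by_cases h2 : i ≤ ps
      · have hie : i = ps := by omega
        rw [if_pos h2, if_neg h1, hie, ← hpsv]
        have : b + (ps + 1 - ps) = b + 1 := by omega
        rw [this]
        exact B'.hadj b (by omega)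
      · rw [if_neg h2, if_neg h1]
        have : b + (i + 1 - ps) = b + (i - ps) + 1 := by omega
        rw [this]
        exact B'.hadj _ (by omega)
  · intro p hp q hq hpq
    by_cases h1 : p ≤ ps <;> by_cases h2 : q ≤ ps
    · rw [if_pos h1, if_pos h2] at hpq
      exact B.hinj p (by omega) q (by omega) hpq
    · rw [if_pos h1, if_neg h2] at hpq
      exfalso
      have hint : b + (q - ps) ≤ B'.L := by omega
      rcases Nat.eq_or_lt_of_le hint with he | hl
      · rw [he, B'.hLv] at hpq
        rcases Nat.eq_zero_or_pos p with h | h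
        · rw [h, B.h0] at hpq; exact absurd (hr_inj hpq) (by omega)
        · exact B.hoff p h (by omega) m' hpq
      · rcases Nat.eq_zero_or_pos p with h | h
        · rw [h, B.h0] at hpq
          exact B'.hoff _ (by omega) hl j hpq.symm
        · have : b + (q - ps) ≤ b :=
            hbmax _ (by omega) ⟨p, h, by omega, hpq.symm⟩
          omega
    · rw [if_neg h1, if_pos h2] at hpq
      exfalso
      have hint : b + (p - ps) ≤ B'.L := by omega
      rcases Nat.eq_or_lt_of_le hint with he | hl
      · rw [he, B'.hLv] at hpq
        rcases Nat.eq_zero_or_pos q with h | h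
        · rw [h, B.h0] at hpq; exact absurd (hr_inj hpq.symm) (by omega)
        · exact B.hoff q h (by omega) m' hpq.symm
      · rcases Nat.eq_zero_or_pos q with h | h
        · rw [h, B.h0] at hpq
          exact B'.hoff _ (by omega) hl j hpq
        · have : b + (p - ps) ≤ b :=
            hbmax _ (by omega) ⟨q, h, by omega, hpq⟩
          omega
    · rw [if_neg h1, if_neg h2] at hpq
      have := B'.hinj _ (by omega) _ (by omega) hpq
      omega
  · intro i hi0 hiL c
    by_cases h1 : i ≤ ps
    · rw [if_pos h1]
      exact B.hoff i hi0 (by omega) c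
    · rw [if_neg h1]
      exact B'.hoff _ (by omega) (by omega) c

/-- If from some `r j` there are bridges reaching arbitrarily far, we get a
contradiction (a bi-infinite path). -/
lemma fork_case {H : SimpleGraph V} (hlf : ∀ v : V, (H.neighborSet v).Finite)
    (hnopath : ¬ ∃ s : ℤ → V, Function.Injective s ∧ ∀ n : ℤ, H.Adj (s n) (s (n+1)))
    {r : ℕ → V} (hr_inj : Function.Injective r) (hr_adj : ∀ n, H.Adj (r n) (r (n+1)))
    (j : ℕ) (hub : ∀ K, ∃ m, K ≤ m ∧ IsBridge H r j m) : False := by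
  classical
  refine no_pair_fan H hlf hnopath (r j) ?_
  intro k
  obtain ⟨m, hmK, hjm, ⟨B⟩⟩ := hub (j + k + 1)
  refine ⟨fun i => r (j + i), fun i => if i ≤ B.L then B.g i else r (m + (i - B.L)),
    by dsimp only; rw [Nat.add_zero], by dsimp only; rw [if_pos (Nat.zero_le _)]; exact B.h0, ?_, ?_, ?_, ?_, ?_⟩
  · intro i hi
    dsimp only
    have : j + (i + 1) = (j + i) + 1 := by omega
    rw [this]
    exact hr_adj (j + i)
  · intro i hi
    dsimp only
    by_cases h1 : i + 1 ≤ B.L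
    · rw [if_pos (by omega), if_pos h1]
      exact B.hadj i (by omega)
    · by_cases h2 : i ≤ B.L
      · have hie : i = B.L := by omega
        rw [if_pos h2, if_neg h1, hie, B.hLv]
        have : m + (B.L + 1 - B.L) = m + 1 := by omega
        rw [this]
        exact hr_adj m
      · rw [if_neg h2, if_neg h1]
        have : m + (i + 1 - B.L) = m + (i - B.L) + 1 := by omega
        rw [this]
        exact hr_adj _
  · intro p hp q hq h
    dsimp only at h
    have := hr_inj h
    omega
  · intro p hp q hq h
    dsimp only at h
    by_cases h1 : p ≤ B.L <;> by_cases h2 : q ≤ B.L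
    · rw [if_pos h1, if_pos h2] at h
      exact B.hinj p h1 q h2 h
    · rw [if_pos h1, if_neg h2] at h
      exfalso
      rcases Nat.eq_zero_or_pos p with h0 | h0
      · rw [h0, B.h0] at h
        have := hr_inj h; omega
      · rcases Nat.eq_or_lt_of_le h1 with he | hl
        · rw [he, B.hLv] at h
          have := hr_inj h; omega
        · exact B.hoff p h0 hl _ h
    · rw [if_neg h1, if_pos h2] at h
      exfalso
      rcases Nat.eq_zero_or_pos q with h0 | h0
      · rw [h0, B.h0] at h
        have := hr_inj h.symm; omega
      · rcases Nat.eq_or_lt_of_le h2 with he | hl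
        · rw [he, B.hLv] at h
          have := hr_inj h.symm; omega
        · exact B.hoff q h0 hl _ h.symm
    · rw [if_neg h1, if_neg h2] at h
      have := hr_inj h
      omega
  · intro p hp q hq h
    dsimp only at h
    by_cases h2 : q ≤ B.L
    · rw [if_pos h2] at h
      rcases Nat.eq_zero_or_pos q with h0 | h0
      · rw [h0, B.h0] at h
        have := hr_inj h
        omega
      · exfalso
        rcases Nat.eq_or_lt_of_le h2 with he | hl
        · rw [he, B.hLv] at h
          have := hr_inj h; omega
        · exact B.hoff q h0 hl _ h.symm
    · rw [if_neg h2] at h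
      have := hr_inj h
      omega

lemma bridge_of_nocut {H : SimpleGraph V} (hlf : ∀ v : V, (H.neighborSet v).Finite)
    (hnopath : ¬ ∃ s : ℤ → V, Function.Injective s ∧ ∀ n : ℤ, H.Adj (s n) (s (n+1)))
    {r : ℕ → V} (hr_inj : Function.Injective r) (hr_adj : ∀ n, H.Adj (r n) (r (n+1)))
    {x : V} (hx0 : r 0 = x) {n : ℕ} (hn : 1 ≤ n)
    (hinf : {z : V | (delVertex H (r n)).Reachable x z}.Infinite) :
    ∃ j m, j < n ∧ n < m ∧ IsBridge H r j m := by
  classical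
  set G := delVertex H (r n) with hG
  have hlf' : ∀ v : V, (G.neighborSet v).Finite := by
    intro v
    refine (hlf v).subset ?_
    intro u hu
    exact (show H.Adj v u ∧ _ from hu).1
  obtain ⟨ρ, hρ0, hρinj, hρadj⟩ := exists_ray G hlf' x hinf
  have hρH : ∀ i, H.Adj (ρ i) (ρ (i+1)) := fun i => (show H.Adj (ρ i) (ρ (i+1)) ∧ _ from hρadj i).1
  have hρav : ∀ i, ρ i ≠ r n := by
    intro i
    cases i with
    | zero =>
      rw [hρ0, ← hx0]
      intro h
      have := hr_inj h
      omega
    | succ i => exact (show H.Adj (ρ i) (ρ (i+1)) ∧ ρ i ≠ r n ∧ ρ (i+1) ≠ r n from hρadj i).2.2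
  by_cases hA : ∃ i, ∃ m, n < m ∧ ρ i = r m
  · set k := Nat.find hA with hk
    obtain ⟨m, hm, hρk⟩ := Nat.find_spec hA
    set I : Set ℕ := {i | i ≤ k ∧ ∃ c, c < n ∧ ρ i = r c} with hI
    have hI0 : 0 ∈ I := ⟨Nat.zero_le k, 0, by omega, by rw [hρ0, hx0]⟩
    have hIb : BddAbove I := ⟨k, fun i hi => hi.1⟩
    obtain ⟨hsk, c, hcn, hρs⟩ : sSup I ∈ I := Nat.sSup_mem ⟨0, hI0⟩ hIb
    set s := sSup I with hs
    have hsmax : ∀ i ∈ I, i ≤ s := fun i hi => le_csSup hIb hi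
    have hsklt : s < k := by
      rcases Nat.eq_or_lt_of_le hsk with he | hl
      · exfalso
        rw [he, hρk] at hρs
        have := hr_inj hρs
        omega
      · exact hl
    refine ⟨c, m, hcn, hm, by omega, ⟨⟨k - s, fun t => ρ (s + t), by omega,
      by rw [Nat.add_zero]; exact hρs, ?_, ?_, ?_, ?_⟩⟩⟩
    · have : s + (k - s) = k := by omega
      rw [this]
      exact hρk
    · intro i hi
      have : s + (i+1) = (s+i) + 1 := by omega
      rw [this]
      exact hρH (s+i)
    · intro p hp q hq h
      have := hρinj h
      omega
    · intro i hi0 hik c' hc'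
      rcases Nat.lt_trichotomy c' n with h1 | h1 | h1
      · have hmem : s + i ∈ I := ⟨by omega, c', h1, hc'⟩
        have := hsmax _ hmem
        omega
      · exact hρav (s+i) (by rw [hc', h1])
      · exact absurd ⟨c', h1, hc'⟩ (Nat.find_min hA (show s + i < k by omega))
  · push_neg at hA
    exfalso
    apply hnopath
    set I : Set ℕ := {i | ∃ c, c ≤ n ∧ ρ i = r c} with hI
    have hI0 : 0 ∈ I := ⟨0, Nat.zero_le n, by rw [hρ0, hx0]⟩
    have hIfin : I.Finite := by
      have hsub : I ⊆ ρ ⁻¹' (r '' (Set.Icc 0 n)) := by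
        rintro i ⟨c, hc, h⟩
        exact ⟨c, ⟨Nat.zero_le c, hc⟩, h.symm⟩
      refine Set.Finite.subset (Set.Finite.preimage (hρinj.injOn) ?_) hsub
      exact (Set.finite_Icc 0 n).image r
    obtain ⟨c, hcn, hρs⟩ : ∃ c, c ≤ n ∧ ρ (sSup I) = r c := Nat.sSup_mem ⟨0, hI0⟩ hIfin.bddAbove
    set s := sSup I with hs
    have hsmax : ∀ i ∈ I, i ≤ s := fun i hi => le_csSup hIfin.bddAbove hi
    refine biray_of_two_rays H (fun t => ρ (s + t)) (fun t => r (c + t)) ?_ ?_ ?_ ?_ ?_ ?_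
    · rw [Nat.add_zero, Nat.add_zero]
      exact hρs
    · intro a b h
      have := hρinj h
      omega
    · intro a b h
      have := hr_inj h
      omega
    · intro t
      have : s + (t+1) = (s+t) + 1 := by omega
      rw [this]
      exact hρH (s+t)
    · intro t
      have : c + (t+1) = (c+t) + 1 := by omega
      rw [this]
      exact hr_adj (c+t)
    · intro i u h
      rcases le_or_gt (c + u) n with h1 | h1
      · have hmem : s + i ∈ I := ⟨c + u, h1, h⟩
        have hle := hsmax _ hmem
        have hi0 : i = 0 := by omega
        subst hi0
        rw [Nat.add_zero, hρs] at h
        have := hr_inj h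
        omega
      · exact absurd h (hA (s+i) (c+u) h1)

lemma family_exists {H : SimpleGraph V} {r : ℕ → V}
    {N : ℕ}
    (hbr : ∀ n, N ≤ n → ∃ j m, j < n ∧ n < m ∧ IsBridge H r j m)
    (hbd : ∀ j, BddAbove {m | IsBridge H r j m}) :
    ∃ a M : ℕ → ℕ,
      (∀ k, IsBridge H r (a k) (M k)) ∧
      (∀ k, a k < M k) ∧ (∀ k, M k < M (k+1)) ∧ (∀ k, a (k+1) < M k) ∧
      (∀ k m', IsBridge H r (a k) m' → m' ≤ M k) := by
  classical
  have step : ∀ n, N ≤ n → ∃ j M, IsBridge H r j M ∧ j < n ∧ n < M ∧ N < M ∧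
      ∀ m', IsBridge H r j m' → m' ≤ M := by
    intro n hn
    obtain ⟨j, m, hjn, hnm, hbrg⟩ := hbr n hn
    have hne : {m' | IsBridge H r j m'}.Nonempty := ⟨m, hbrg⟩
    have hmem : sSup {m' | IsBridge H r j m'} ∈ {m' | IsBridge H r j m'} :=
      Nat.sSup_mem hne (hbd j)
    have hge : m ≤ sSup {m' | IsBridge H r j m'} := le_csSup (hbd j) hbrg
    exact ⟨j, sSup {m' | IsBridge H r j m'}, hmem, hjn, by omega, by omega,
      fun m' hm' => le_csSup (hbd j) hm'⟩
  let Q := {q : ℕ × ℕ // IsBridge H r q.1 q.2 ∧ N < q.2 ∧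
      ∀ m', IsBridge H r q.1 m' → m' ≤ q.2}
  let stepf : ∀ n, N ≤ n → {q : Q // q.1.1 < n ∧ n < q.1.2} := fun n hn =>
    ⟨⟨(Classical.choose (step n hn),
       Classical.choose (Classical.choose_spec (step n hn))),
      (Classical.choose_spec (Classical.choose_spec (step n hn))).1,
      (Classical.choose_spec (Classical.choose_spec (step n hn))).2.2.2.1,
      (Classical.choose_spec (Classical.choose_spec (step n hn))).2.2.2.2⟩,
      (Classical.choose_spec (Classical.choose_spec (step n hn))).2.1,
      (Classical.choose_spec (Classical.choose_spec (step n hn))).2.2.1⟩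
  let fam : ℕ → Q := fun k =>
    Nat.rec (stepf N le_rfl).1 (fun _ prev => (stepf prev.1.2 (le_of_lt prev.2.2.1)).1) k
  have hrel : ∀ k, (fam (k+1)).1.1 < (fam k).1.2 ∧ (fam k).1.2 < (fam (k+1)).1.2 := by
    intro k
    exact (stepf (fam k).1.2 (le_of_lt (fam k).2.2.1)).2
  refine ⟨fun k => (fam k).1.1, fun k => (fam k).1.2, fun k => (fam k).2.1,
    fun k => (fam k).2.1.1, fun k => (hrel k).2, fun k => (hrel k).1,
    fun k => (fam k).2.2.2⟩

lemma thin_exists (a M : ℕ → ℕ) (hstep : ∀ k, a (k+1) < M k)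
    (hstrict : ∀ k, M k < M (k+1)) (hainj : Function.Injective a) :
    ∃ e : ℕ → ℕ, StrictMono e ∧ (∀ t, a (e (t+1)) < M (e t)) ∧
      (∀ t, M (e t) ≤ a (e (t+2))) := by
  classical
  have hMs : StrictMono M := strictMono_nat_of_lt_succ hstrict
  have hbdd : ∀ c : ℕ, BddAbove {k | a k < c} := by
    intro c
    refine Set.Finite.bddAbove ?_
    have : {k | a k < c} = a ⁻¹' (Set.Iio c) := rfl
    rw [this]
    exact (Set.finite_Iio c).preimage hainj.injOn
  let D : ℕ → ℕ := fun t => Nat.rec 0 (fun _ prev => sSup {k | a k < M prev}) t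
  have hDsucc : ∀ t, D (t+1) = sSup {k | a k < M (D t)} := fun t => rfl
  have hmemne : ∀ t, (D t) + 1 ∈ {k | a k < M (D t)} := fun t => hstep (D t)
  have hmem : ∀ t, a (D (t+1)) < M (D t) := by
    intro t
    rw [hDsucc t]
    exact Nat.sSup_mem ⟨D t + 1, hmemne t⟩ (hbdd _)
  have hlt : ∀ t, D t < D (t+1) := by
    intro t
    have : D t + 1 ≤ D (t+1) := by
      rw [hDsucc t]
      exact le_csSup (hbdd _) (hmemne t)
    omega
  have hDmono : StrictMono D := strictMono_nat_of_lt_succ hlt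
  refine ⟨D, hDmono, hmem, ?_⟩
  intro t
  by_contra hc
  push_neg at hc
  have : D (t+2) ≤ D (t+1) := by
    rw [hDsucc t]
    exact le_csSup (hbdd _) hc
  have := hDmono (show t+1 < t+2 by omega)
  omega

lemma family_disjoint {H : SimpleGraph V} {r : ℕ → V} (hr_inj : Function.Injective r)
    (a M : ℕ → ℕ) (B : ∀ k, BW H r (a k) (M k))
    (haM : ∀ k, a k < M k) (hMs : ∀ k, M k < M (k+1))
    (hmax : ∀ k m', IsBridge H r (a k) m' → m' ≤ M k) :
    ∀ i k, i < k → ∀ p, p ≤ (B i).L → ∀ q, q ≤ (B k).L → (B i).g p = (B k).g q →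
      p = (B i).L ∧ q = 0 ∧ M i = a k := by
  intro i k hik p hp q hq h
  have hMik : M i < M k := strictMono_nat_of_lt_succ hMs hik
  rcases Nat.eq_zero_or_pos q with hq0 | hq0
  · subst hq0
    rw [(B k).h0] at h
    rcases Nat.eq_zero_or_pos p with hp0 | hp0
    · exfalso
      subst hp0
      rw [(B i).h0] at h
      have ha : a i = a k := hr_inj h
      have : M k ≤ M i := hmax i (M k) (ha ▸ ⟨haM k, ⟨B k⟩⟩)
      omega
    · rcases Nat.eq_or_lt_of_le hp with hpe | hpl
      · rw [hpe, (B i).hLv] at h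
        exact ⟨hpe, rfl, hr_inj h⟩
      · exact absurd h ((B i).hoff p hp0 hpl (a k))
  · exfalso
    rcases Nat.eq_or_lt_of_le hq with hqe | hql
    · rw [hqe, (B k).hLv] at h
      rcases Nat.eq_zero_or_pos p with hp0 | hp0
      · subst hp0
        rw [(B i).h0] at h
        have := hr_inj h
        have := haM i
        omega
      · rcases Nat.eq_or_lt_of_le hp with hpe | hpl
        · rw [hpe, (B i).hLv] at h
          have := hr_inj h
          omega
        · exact (B i).hoff p hp0 hpl (M k) h
    · rcases Nat.eq_zero_or_pos p with hp0 | hp0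
      · subst hp0
        rw [(B i).h0] at h
        exact (B k).hoff q hq0 hql (a i) h.symm
      · rcases Nat.eq_or_lt_of_le hp with hpe | hpl
        · rw [hpe, (B i).hLv] at h
          exact (B k).hoff q hq0 hql (M i) h.symm
        · have hbr : IsBridge H r (a i) (M k) :=
            bridge_merge hr_inj (by have h1 := haM i; omega) (B i) (B k) ⟨p, q, hp0, hpl, hq0, hql, h⟩
          have := hmax i (M k) hbr
          omega


lemma assemble {H : SimpleGraph V} {r : ℕ → V} (hr_inj : Function.Injective r)
    (hr_adj : ∀ n, H.Adj (r n) (r (n+1)))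
    (aa MM LL : ℕ → ℕ) (gg : ℕ → ℕ → V)
    (haM : ∀ t, aa t < MM t)
    (hMa : ∀ t, MM t ≤ aa (t+1))
    (hL1 : ∀ t, 1 ≤ LL t)
    (hg0 : ∀ t, gg t 0 = r (aa t))
    (hgL : ∀ t, gg t (LL t) = r (MM t))
    (hgadj : ∀ t i, i < LL t → H.Adj (gg t i) (gg t (i+1)))
    (hginj : ∀ t p q, p ≤ LL t → q ≤ LL t → gg t p = gg t q → p = q)
    (hgoff : ∀ t i, 0 < i → i < LL t → ∀ c, gg t i ≠ r c)
    (hcross : ∀ s t p q, s < t → p ≤ LL s → q ≤ LL t → gg s p = gg t q →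
        t = s+1 ∧ p = LL s ∧ q = 0)
    (c₀ : ℕ) (hc₀ : c₀ ≤ aa 0) :
    ∃ A : ℕ → V, A 0 = r c₀ ∧ Function.Injective A ∧ (∀ n, H.Adj (A n) (A (n+1))) ∧
      ∀ n, (∃ pos, A n = r pos ∧
              ((c₀ ≤ pos ∧ pos ≤ aa 0) ∨ ∃ i, MM i ≤ pos ∧ pos ≤ aa (i+1)))
        ∨ (∃ t p, 0 < p ∧ p ≤ LL t ∧ A n = gg t p) := by
  classical
  have hMlt : ∀ t, MM t < MM (t+1) := fun t => lt_of_le_of_lt (hMa t) (haM (t+1))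
  have hMmono : ∀ i j, i ≤ j → MM i ≤ MM j :=
    fun i j hij => (strictMono_nat_of_lt_succ hMlt).monotone hij
  set d0 : ℕ := aa 0 - c₀ with hd0
  set dd : ℕ → ℕ := fun t => aa (t+1) - MM t with hdd
  set piece : ℕ → ℕ → V :=
    fun t s => if s ≤ dd t then r (MM t + s) else gg (t+1) (s - dd t) with hpiece
  set len : ℕ → ℕ :=
    fun t => Nat.rec (d0 + LL 0) (fun t' prev => prev + (dd t' + LL (t'+1))) t with hlen
  set P : ℕ → ℕ → V := fun t => Nat.rec
      (fun n => if n ≤ d0 then r (c₀ + n) else gg 0 (n - d0))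
      (fun t' Pt => fun n => if n ≤ len t' then Pt n else piece t' (n - len t')) t with hPdef
  have hlen0 : len 0 = d0 + LL 0 := rfl
  have hlens : ∀ t, len (t+1) = len t + (dd t + LL (t+1)) := fun t => rfl
  have hP0 : ∀ n, P 0 n = if n ≤ d0 then r (c₀ + n) else gg 0 (n - d0) := fun n => rfl
  have hPs : ∀ t n, P (t+1) n = if n ≤ len t then P t n else piece t (n - len t) :=
    fun t n => rfl
  have hcd0 : c₀ + d0 = aa 0 := by omega
  have hMdd : ∀ t, MM t + dd t = aa (t+1) := by
    intro t
    have h1 := hMa t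
    have h2 : dd t = aa (t+1) - MM t := rfl
    omega
  -- the invariant
  have INV : ∀ t,
      (P t 0 = r c₀) ∧ (P t (len t) = r (MM t)) ∧
      (∀ n, n < len t → H.Adj (P t n) (P t (n+1))) ∧
      (∀ p, p ≤ len t → ∀ q, q ≤ len t → P t p = P t q → p = q) ∧
      (∀ n, n ≤ len t →
        (∃ pos, P t n = r pos ∧ pos ≤ MM t ∧
          ((c₀ ≤ pos ∧ pos ≤ aa 0) ∨ ∃ i, i ≤ t ∧ MM i ≤ pos ∧ pos ≤ aa (i+1)))
        ∨ (∃ s p, s ≤ t ∧ 0 < p ∧ p ≤ LL s ∧ P t n = gg s p)) := by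
    intro t
    induction t with
    | zero =>
      have hL0 := hL1 0
      refine ⟨?_, ?_, ?_, ?_, ?_⟩
      · rw [hP0, if_pos (Nat.zero_le d0), Nat.add_zero]
      · rw [hP0, hlen0, if_neg (by omega)]
        have : d0 + LL 0 - d0 = LL 0 := by omega
        rw [this, hgL 0]
      · intro n hn
        rw [hlen0] at hn
        rw [hP0, hP0]
        by_cases h1 : n + 1 ≤ d0
        · rw [if_pos (by omega), if_pos h1]
          have : c₀ + (n+1) = (c₀ + n) + 1 := by omega
          rw [this]
          exact hr_adj (c₀ + n)
        · by_cases h2 : n ≤ d0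
          · have hne : n = d0 := by omega
            rw [if_pos h2, if_neg h1, hne, hcd0, ← hg0 0]
            have : d0 + 1 - d0 = 0 + 1 := by omega
            rw [this]
            exact hgadj 0 0 (by omega)
          · rw [if_neg h2, if_neg h1]
            have : n + 1 - d0 = (n - d0) + 1 := by omega
            rw [this]
            exact hgadj 0 (n - d0) (by omega)
      · intro p hp q hq h
        rw [hlen0] at hp hq
        rw [hP0, hP0] at h
        by_cases h1 : p ≤ d0 <;> by_cases h2 : q ≤ d0
        · rw [if_pos h1, if_pos h2] at h
          have := hr_inj h; omega
        · rw [if_pos h1, if_neg h2] at h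
          exfalso
          rcases Nat.lt_or_ge (q - d0) (LL 0) with hl | hg
          · exact hgoff 0 (q - d0) (by omega) hl (c₀ + p) h.symm
          · have hqe : q - d0 = LL 0 := by omega
            rw [hqe, hgL 0] at h
            have := hr_inj h
            have := haM 0
            omega
        · rw [if_neg h1, if_pos h2] at h
          exfalso
          rcases Nat.lt_or_ge (p - d0) (LL 0) with hl | hg
          · exact hgoff 0 (p - d0) (by omega) hl (c₀ + q) h
          · have hpe : p - d0 = LL 0 := by omega
            rw [hpe, hgL 0] at h
            have := hr_inj h.symm
            have := haM 0
            omega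
        · rw [if_neg h1, if_neg h2] at h
          have := hginj 0 _ _ (by omega : p - d0 ≤ LL 0) (by omega : q - d0 ≤ LL 0) h
          omega
      · intro n hn
        rw [hlen0] at hn
        rw [hP0]
        by_cases h1 : n ≤ d0
        · left
          refine ⟨c₀ + n, by rw [if_pos h1], ?_, Or.inl ⟨by omega, by omega⟩⟩
          have := haM 0
          omega
        · right
          exact ⟨0, n - d0, le_rfl, by omega, by omega, by rw [if_neg h1]⟩
    | succ t ih =>
      obtain ⟨ih1, ih2, ih3, ih4, ih5⟩ := ih
      have hstab : ∀ n, n ≤ len t → P (t+1) n = P t n := by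
        intro n hn
        rw [hPs, if_pos hn]
      have hLs := hL1 (t+1)
      -- new values are disjoint from old values
      have hold_new : ∀ p, p ≤ len t → ∀ s, 1 ≤ s → s ≤ dd t + LL (t+1) →
          P t p ≠ piece t s := by
        intro p hp s hs1 hs2 h
        rw [hpiece] at h
        dsimp only at h
        rcases ih5 p hp with ⟨pos, hv, hposM, _⟩ | ⟨sb, pb, hsb, hpb0, hpbL, hv⟩
        · rw [hv] at h
          by_cases hsd : s ≤ dd t
          · rw [if_pos hsd] at h
            have := hr_inj h
            omega
          · rw [if_neg hsd] at h
            rcases Nat.lt_or_ge (s - dd t) (LL (t+1)) with hl | hg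
            · exact hgoff (t+1) (s - dd t) (by omega) hl pos h.symm
            · have hse : s - dd t = LL (t+1) := by omega
              rw [hse, hgL (t+1)] at h
              have := hr_inj h
              have := hMlt t
              omega
        · rw [hv] at h
          by_cases hsd : s ≤ dd t
          · rw [if_pos hsd] at h
            rcases Nat.lt_or_ge pb (LL sb) with hl | hg
            · exact hgoff sb pb hpb0 hl (MM t + s) h
            · have hpe : pb = LL sb := by omega
              rw [hpe, hgL sb] at h
              have := hr_inj h
              have := hMmono sb t hsb
              omega
          · rw [if_neg hsd] at h
            have := hcross sb (t+1) pb (s - dd t) (by omega) (by omega) (by omega) h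
            omega
      -- injectivity of the new piece
      have hpiece_inj : ∀ s, 1 ≤ s → s ≤ dd t + LL (t+1) → ∀ s', 1 ≤ s' →
          s' ≤ dd t + LL (t+1) → piece t s = piece t s' → s = s' := by
        intro s hs1 hs2 s' hs1' hs2' h
        rw [hpiece] at h
        dsimp only at h
        by_cases h1 : s ≤ dd t <;> by_cases h2 : s' ≤ dd t
        · rw [if_pos h1, if_pos h2] at h
          have := hr_inj h; omega
        · rw [if_pos h1, if_neg h2] at h
          exfalso
          rcases Nat.lt_or_ge (s' - dd t) (LL (t+1)) with hl | hg
          · exact hgoff (t+1) (s' - dd t) (by omega) hl (MM t + s) h.symm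
          · have hse : s' - dd t = LL (t+1) := by omega
            rw [hse, hgL (t+1)] at h
            have := hr_inj h
            have := hMlt t
            have := hMdd t
            have := haM (t+1)
            omega
        · rw [if_neg h1, if_pos h2] at h
          exfalso
          rcases Nat.lt_or_ge (s - dd t) (LL (t+1)) with hl | hg
          · exact hgoff (t+1) (s - dd t) (by omega) hl (MM t + s') h
          · have hse : s - dd t = LL (t+1) := by omega
            rw [hse, hgL (t+1)] at h
            have := hr_inj h.symm
            have := hMlt t
            have := hMdd t
            have := haM (t+1)
            omega
        · rw [if_neg h1, if_neg h2] at h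
          have := hginj (t+1) _ _ (by omega : s - dd t ≤ LL (t+1))
            (by omega : s' - dd t ≤ LL (t+1)) h
          omega
      refine ⟨?_, ?_, ?_, ?_, ?_⟩
      · rw [hstab 0 (Nat.zero_le _)]
        exact ih1
      · rw [hPs, if_neg (by rw [hlens]; omega)]
        rw [hpiece]
        dsimp only
        rw [hlens]
        have e1 : len t + (dd t + LL (t+1)) - len t = dd t + LL (t+1) := by omega
        rw [e1, if_neg (by omega)]
        have e2 : dd t + LL (t+1) - dd t = LL (t+1) := by omega
        rw [e2, hgL (t+1)]
      · intro n hn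
        rw [hlens] at hn
        by_cases h1 : n + 1 ≤ len t
        · rw [hstab n (by omega), hstab (n+1) h1]
          exact ih3 n (by omega)
        · by_cases h2 : n ≤ len t
          · have hne : n = len t := by omega
            rw [hstab n h2, hne, ih2, hPs, if_neg (by omega)]
            rw [hpiece]
            dsimp only
            have e1 : len t + 1 - len t = 1 := by omega
            rw [e1]
            by_cases h3 : 1 ≤ dd t
            · rw [if_pos h3]
              exact hr_adj (MM t)
            · rw [if_neg h3]
              have hdd0 : dd t = 0 := by omega
              have : MM t = aa (t+1) := by have := hMa t; have := hMdd t; omega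
              rw [this, ← hg0 (t+1)]
              have e2 : 1 - dd t = 0 + 1 := by omega
              rw [e2]
              exact hgadj (t+1) 0 (by omega)
          · rw [hPs, hPs, if_neg h2, if_neg (by omega)]
            rw [hpiece]
            dsimp only
            have e1 : n + 1 - len t = (n - len t) + 1 := by omega
            rw [e1]
            set s := n - len t with hsdef
            have hs1 : 1 ≤ s := by omega
            have hs2 : s + 1 ≤ dd t + LL (t+1) := by omega
            by_cases h3 : s + 1 ≤ dd t
            · rw [if_pos (by omega), if_pos h3]
              have : MM t + (s+1) = (MM t + s) + 1 := by omega
              rw [this]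
              exact hr_adj (MM t + s)
            · by_cases h4 : s ≤ dd t
              · have hse : s = dd t := by omega
                rw [if_pos h4, if_neg h3, hse, hMdd t, ← hg0 (t+1)]
                have e2 : dd t + 1 - dd t = 0 + 1 := by omega
                rw [e2]
                exact hgadj (t+1) 0 (by omega)
              · rw [if_neg h4, if_neg h3]
                have e2 : s + 1 - dd t = (s - dd t) + 1 := by omega
                rw [e2]
                exact hgadj (t+1) (s - dd t) (by omega)
      · intro p hp q hq h
        rw [hlens] at hp hq
        by_cases h1 : p ≤ len t <;> by_cases h2 : q ≤ len t
        · rw [hstab p h1, hstab q h2] at h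
          exact ih4 p h1 q h2 h
        · exfalso
          rw [hstab p h1, hPs, if_neg h2] at h
          exact hold_new p h1 (q - len t) (by omega) (by omega) h
        · exfalso
          rw [hstab q h2, hPs, if_neg h1] at h
          exact hold_new q h2 (p - len t) (by omega) (by omega) h.symm
        · rw [hPs, hPs, if_neg h1, if_neg h2] at h
          have := hpiece_inj (p - len t) (by omega) (by omega) (q - len t) (by omega)
            (by omega) h
          omega
      · intro n hn
        rw [hlens] at hn
        by_cases h1 : n ≤ len t
        · rw [hstab n h1]
          rcases ih5 n h1 with ⟨pos, hv, hposM, hc⟩ | ⟨sb, pb, hsb, hpb0, hpbL, hv⟩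
          · left
            refine ⟨pos, hv, le_trans hposM (le_of_lt (hMlt t)), ?_⟩
            rcases hc with hc | ⟨i, hi, hc1, hc2⟩
            · exact Or.inl hc
            · exact Or.inr ⟨i, by omega, hc1, hc2⟩
          · right
            exact ⟨sb, pb, by omega, hpb0, hpbL, hv⟩
        · rw [hPs, if_neg h1, hpiece]
          dsimp only
          set s := n - len t with hsdef
          by_cases h2 : s ≤ dd t
          · left
            rw [if_pos h2]
            refine ⟨MM t + s, rfl, ?_, Or.inr ⟨t, by omega, by omega, ?_⟩⟩
            · have := hMdd t
              have := haM (t+1)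
              omega
            · have := hMdd t
              omega
          · right
            rw [if_neg h2]
            exact ⟨t+1, s - dd t, le_rfl, by omega, by omega, rfl⟩
  -- lengths grow
  have hlenlt : ∀ t, len t < len (t+1) := by
    intro t
    rw [hlens]
    have := hL1 (t+1)
    omega
  have hlenmono : ∀ i j, i ≤ j → len i ≤ len j :=
    fun i j hij => (strictMono_nat_of_lt_succ hlenlt).monotone hij
  have hlenge : ∀ t, t ≤ len t := by
    intro t
    induction t with
    | zero => exact Nat.zero_le _
    | succ t ih =>
      have := hlenlt t
      omega
  have hstabc : ∀ i j, i ≤ j → ∀ n, n ≤ len i → P j n = P i n := by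
    intro i j hij
    induction hij with
    | refl => intro n _; rfl
    | @step j' h ih =>
      intro n hn
      rw [hPs, if_pos (le_trans hn (hlenmono i j' h)), ih n hn]
  refine ⟨fun n => P n n, (INV 0).1, ?_, ?_, ?_⟩
  · intro n1 n2 h
    dsimp only at h
    rcases le_total n1 n2 with hc | hc
    · rw [← hstabc n1 n2 hc n1 (hlenge n1)] at h
      exact (INV n2).2.2.2.1 n1 (le_trans hc (hlenge n2)) n2 (hlenge n2) h
    · rw [← hstabc n2 n1 hc n2 (hlenge n2)] at h
      exact ((INV n1).2.2.2.1 n1 (hlenge n1) n2 (le_trans hc (hlenge n1)) h)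
  · intro n
    dsimp only
    rw [show P n n = P (n+1) n from (hstabc n (n+1) (by omega) n (hlenge n)).symm]
    exact (INV (n+1)).2.2.1 n (by have := hlenge (n+1); omega)
  · intro n
    dsimp only
    rcases (INV n).2.2.2.2 n (hlenge n) with ⟨pos, hv, _, hc⟩ | ⟨s, p, _, hp0, hpL, hv⟩
    · left
      refine ⟨pos, hv, ?_⟩
      rcases hc with hc | ⟨i, _, hc1, hc2⟩
      · exact Or.inl hc
      · exact Or.inr ⟨i, hc1, hc2⟩
    · right
      exact ⟨s, p, hp0, hpL, hv⟩

lemma no_family {H : SimpleGraph V}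
    (hnopath : ¬ ∃ s : ℤ → V, Function.Injective s ∧ ∀ n : ℤ, H.Adj (s n) (s (n+1)))
    {r : ℕ → V} (hr_inj : Function.Injective r) (hr_adj : ∀ n, H.Adj (r n) (r (n+1)))
    (a M : ℕ → ℕ) (B : ∀ k, BW H r (a k) (M k))
    (haM : ∀ k, a k < M k) (hMs : ∀ k, M k < M (k+1)) (hstep : ∀ k, a (k+1) < M k)
    (hmax : ∀ k m', IsBridge H r (a k) m' → m' ≤ M k) : False := by
  classical
  have hMsm : StrictMono M := strictMono_nat_of_lt_succ hMs
  have hainj : Function.Injective a := by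
    intro i k h
    by_contra hne
    rcases Nat.lt_or_ge i k with hik | hik
    · have h1 : M k ≤ M i := hmax i (M k) (h ▸ ⟨haM k, ⟨B k⟩⟩)
      have h2 : M i < M k := hMsm hik
      omega
    · have hik' : k < i := by omega
      have h1 : M i ≤ M k := hmax k (M i) (h ▸ ⟨haM i, ⟨B i⟩⟩)
      have h2 : M k < M i := hMsm hik'
      omega
  have disj := family_disjoint hr_inj a M B haM hMs hmax
  obtain ⟨e, hemono, hα, hγ⟩ := thin_exists a M hstep hMs hainj
  set F : ℕ → ℕ := fun t => M (e t) with hF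
  set G : ℕ → ℕ := fun t => a (e t) with hG
  have hFsm : StrictMono F := fun i j h => hMsm (hemono h)
  have hGF : ∀ t, G t < F t := fun t => haM (e t)
  have hα' : ∀ t, G (t+1) < F t := fun t => hα t
  have hγ' : ∀ t, F t ≤ G (t+2) := fun t => hγ t
  set c : ℕ := min (G 0) (G 1) with hc
  -- windows are disjoint
  have hwin : ∀ t u pos, F t ≤ pos → pos ≤ G (t+2) → F u ≤ pos → pos ≤ G (u+2) → t = u := by
    intro t u pos h1 h2 h3 h4
    by_contra hne
    rcases Nat.lt_or_ge t u with h | h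
    · have : pos < F (t+1) := lt_of_le_of_lt h2 (hα' (t+1))
      have : F (t+1) ≤ F u := hFsm.monotone (by omega)
      omega
    · have h' : u < t := by omega
      have : pos < F (u+1) := lt_of_le_of_lt h4 (hα' (u+1))
      have : F (u+1) ≤ F t := hFsm.monotone (by omega)
      omega
  have hlead : ∀ u pos, pos ≤ G 0 ∨ pos ≤ G 1 → F u ≤ pos → False := by
    intro u pos h1 h2
    have h3 : F 0 ≤ F u := hFsm.monotone (Nat.zero_le u)
    have h4 := hGF 0
    have h5 : G 1 < F 0 := hα' 0
    rcases h1 with h | h <;> omega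
  -- build the two rays via `assemble`
  have mkray : ∀ par : ℕ, par ≤ 1 →
      ∃ A : ℕ → V, A 0 = r c ∧ Function.Injective A ∧ (∀ n, H.Adj (A n) (A (n+1))) ∧
      ∀ n, (∃ pos, A n = r pos ∧
              ((c ≤ pos ∧ pos ≤ G par) ∨ ∃ i, F (2*i+par) ≤ pos ∧ pos ≤ G (2*(i+1)+par)))
        ∨ (∃ t p, 0 < p ∧ p ≤ (B (e (2*t+par))).L ∧ A n = (B (e (2*t+par))).g p) := by
    intro par hpar
    have hMa2 : ∀ t, F (2*t+par) ≤ G (2*(t+1)+par) := by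
      intro t
      have h1 : 2*(t+1)+par = (2*t+par)+2 := by omega
      rw [h1]
      exact hγ' (2*t+par)
    have hcr : ∀ s t p q, s < t → p ≤ (B (e (2*s+par))).L → q ≤ (B (e (2*t+par))).L →
        (B (e (2*s+par))).g p = (B (e (2*t+par))).g q →
        t = s+1 ∧ p = (B (e (2*s+par))).L ∧ q = 0 := by
      intro s t p q hst hp hq h
      have hlt : e (2*s+par) < e (2*t+par) := hemono (by omega)
      have hd := disj (e (2*s+par)) (e (2*t+par)) hlt p hp q hq h
      refine ⟨?_, hd.1, hd.2.1⟩
      have hMa' : F (2*s+par) = G (2*t+par) := hd.2.2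
      by_contra hne
      have htss : s + 2 ≤ t := by omega
      have h1 : F (2*t+par-2) ≤ G (2*t+par) := by
        have h2 : 2*t+par-2+2 = 2*t+par := by omega
        have h3 := hγ' (2*t+par-2)
        rw [h2] at h3
        exact h3
      have h2 : F (2*s+par) < F (2*t+par-2) := hFsm (by omega)
      omega
    have hcc : c ≤ G (2*0+par) := by
      have h0e : (2*0+par) = par := by omega
      rw [h0e]
      rcases Nat.eq_zero_or_pos par with h | h
      · rw [h]; exact min_le_left _ _
      · have hp1 : par = 1 := by omega
        rw [hp1]; exact min_le_right _ _
    obtain ⟨A, h1, h2, h3, h4⟩ := assemble hr_inj hr_adj (fun t => G (2*t+par))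
      (fun t => F (2*t+par))
      (fun t => (B (e (2*t+par))).L) (fun t => (B (e (2*t+par))).g)
      (fun t => hGF _) hMa2 (fun t => (B (e (2*t+par))).hL)
      (fun t => (B (e (2*t+par))).h0) (fun t => (B (e (2*t+par))).hLv)
      (fun t => (B (e (2*t+par))).hadj)
      (fun t p q hp hq => (B (e (2*t+par))).hinj p hp q hq)
      (fun t => (B (e (2*t+par))).hoff)
      hcr c hcc
    refine ⟨A, h1, h2, h3, fun n => ?_⟩
    have h5 := h4 n
    have h0e : 2*0+par = par := by omega
    rw [h0e] at h5
    exact h5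
  obtain ⟨A, hA0, hAinj, hAadj, hAdesc⟩ := mkray 0 (by omega)
  obtain ⟨A', hA'0, hA'inj, hA'adj, hA'desc⟩ := mkray 1 (by omega)
  refine hnopath (biray_of_two_rays H A A' (by rw [hA0, hA'0]) hAinj hA'inj hAadj hA'adj ?_)
  intro i j h
  -- the two rays share only their starting vertex
  have hkey : A i = r c := by
    rcases hAdesc i with ⟨pos, hv, hposc⟩ | ⟨t, p, hp0, hpL, hv⟩
    · rcases hA'desc j with ⟨pos', hv', hposc'⟩ | ⟨u, q, hq0, hqL, hv'⟩
      · -- r vs r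
        have hpp : pos = pos' := hr_inj (by rw [← hv, ← hv', h])
        subst hpp
        rcases hposc with ⟨hc1, hc2⟩ | ⟨ii, hi1, hi2⟩
        · rcases hposc' with ⟨hc1', hc2'⟩ | ⟨jj, hj1, hj2⟩
          · have : pos = c := by
              rw [hc]
              omega
            rw [hv, this]
          · exact absurd hj1 (by intro hcon; exact hlead _ pos (Or.inl hc2) hcon)
        · rcases hposc' with ⟨hc1', hc2'⟩ | ⟨jj, hj1, hj2⟩
          · exact absurd hi1 (by intro hcon; exact hlead _ pos (Or.inr hc2') hcon)
          · exfalso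
            have hi2' : pos ≤ G ((2*ii+0)+2) := by
              have h6 : (2*ii+0)+2 = 2*(ii+1)+0 := by omega
              rw [h6]; exact hi2
            have hj2' : pos ≤ G ((2*jj+1)+2) := by
              have h6 : (2*jj+1)+2 = 2*(jj+1)+1 := by omega
              rw [h6]; exact hj2
            have := hwin (2*ii+0) (2*jj+1) pos hi1 hi2' hj1 hj2'
            omega
      · -- r vs bridge
        exfalso
        rw [hv, hv'] at h
        rcases Nat.lt_or_ge q ((B (e (2*u+1))).L) with hl | hg
        · exact (B (e (2*u+1))).hoff q hq0 hl pos h.symm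
        · have hqe : q = (B (e (2*u+1))).L := by omega
          rw [hqe, (B (e (2*u+1))).hLv] at h
          have hpe : pos = F (2*u+1) := hr_inj h
          rcases hposc with ⟨hc1, hc2⟩ | ⟨ii, hi1, hi2⟩
          · exact hlead (2*u+1) pos (Or.inl hc2) (by omega)
          · have hi2' : pos ≤ G ((2*ii+0)+2) := by
              have h6 : (2*ii+0)+2 = 2*(ii+1)+0 := by omega
              rw [h6]; exact hi2
            have := hwin (2*ii+0) (2*u+1) pos hi1 hi2' (by omega) (by
              have h5 := hγ' (2*u+1)
              omega)
            omega
    · -- bridge vs ?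
      exfalso
      rcases hA'desc j with ⟨pos', hv', hposc'⟩ | ⟨u, q, hq0, hqL, hv'⟩
      · rw [hv, hv'] at h
        rcases Nat.lt_or_ge p ((B (e (2*t+0))).L) with hl | hg
        · exact (B (e (2*t+0))).hoff p hp0 hl pos' h
        · have hpe : p = (B (e (2*t+0))).L := by omega
          rw [hpe, (B (e (2*t+0))).hLv] at h
          have hpe' : pos' = F (2*t+0) := hr_inj h.symm
          rcases hposc' with ⟨hc1, hc2⟩ | ⟨jj, hj1, hj2⟩
          · exact hlead (2*t+0) pos' (Or.inr hc2) (by omega)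
          · have hj2' : pos' ≤ G ((2*jj+1)+2) := by
              have h6 : (2*jj+1)+2 = 2*(jj+1)+1 := by omega
              rw [h6]; exact hj2
            have := hwin (2*jj+1) (2*t+0) pos' hj1 hj2' (by omega) (by
              have h5 := hγ' (2*t+0)
              omega)
            omega
      · -- bridge vs bridge
        rw [hv, hv'] at h
        have hne : e (2*t+0) ≠ e (2*u+1) := by
          intro hcon
          have := hemono.injective hcon
          omega
        rcases Nat.lt_or_ge (e (2*t+0)) (e (2*u+1)) with hl | hg
        · have hd := disj _ _ hl p hpL q hqL h
          omega
        · have hl' : e (2*u+1) < e (2*t+0) := by omega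
          have hd := disj _ _ hl' q hqL p hpL h.symm
          omega
  have hi0 : i = 0 := hAinj (by rw [hkey, hA0])
  have hj0 : j = 0 := hA'inj (by rw [← h, hkey, hA'0])
  exact ⟨hi0, hj0⟩

end Stmt15

/-- If `H` is an infinite connected graph of bounded degree with no
bi-infinite simple path and `x` is a vertex, then there are infinitely many
vertices `v` such that the component of `x` in `H \ {v}` is finite. -/
theorem stmt15 {V : Type*} [Infinite V] (H : SimpleGraph V) (hconn : H.Connected)
    (D : ℕ) (hlf : ∀ v : V, (H.neighborSet v).Finite)
    (hD : ∀ v : V, (H.neighborSet v).ncard ≤ D)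
    (hnopath : ¬ ∃ r : ℤ → V, IsBiRay H r) (x : V) :
    {v : V | {z : V | (delVertex H v).Reachable x z}.Finite}.Infinite := by
  classical
  by_contra hS
  rw [Set.not_infinite] at hS
  have hnopath' : ¬ ∃ s : ℤ → V, Function.Injective s ∧ ∀ n : ℤ, H.Adj (s n) (s (n+1)) :=
    fun ⟨s, h1, h2⟩ => hnopath ⟨s, h1, h2⟩
  have hinf : {z | H.Reachable x z}.Infinite := by
    have : {z | H.Reachable x z} = Set.univ :=
      Set.eq_univ_of_forall (fun z => hconn.preconnected x z)
    rw [this]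
    exact Set.infinite_univ
  obtain ⟨r, hr0, hrinj, hradj⟩ := Stmt15.exists_ray H hlf x hinf
  have hpre : {n : ℕ | r n ∈ {v : V | {z : V | (delVertex H v).Reachable x z}.Finite}}.Finite :=
    hS.preimage (hrinj.injOn)
  obtain ⟨N₀, hN₀⟩ := hpre.bddAbove
  have hbr : ∀ n, N₀ + 1 ≤ n → ∃ j m, j < n ∧ n < m ∧ Stmt15.IsBridge H r j m := by
    intro n hn
    have hnS : ¬ {z : V | (delVertex H (r n)).Reachable x z}.Finite := by
      intro hc
      have : n ≤ N₀ := hN₀ hc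
      omega
    exact Stmt15.bridge_of_nocut hlf hnopath' hrinj hradj hr0 (by omega) hnS
  by_cases hbd : ∀ j, BddAbove {m | Stmt15.IsBridge H r j m}
  · obtain ⟨a, M, hfam, h1, h2, h3, hmax⟩ := Stmt15.family_exists hbr hbd
    exact Stmt15.no_family hnopath' hrinj hradj a M
      (fun k => Classical.choice (hfam k).2) h1 h2 h3 hmax
  · push_neg at hbd
    obtain ⟨j, hj⟩ := hbd
    rw [not_bddAbove_iff] at hj
    refine Stmt15.fork_case hlf hnopath' hrinj hradj j ?_
    intro K
    obtain ⟨m, hm, hlt⟩ := hj K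
    exact ⟨m, hlt.le, hm⟩
end

section
/- Let G be an infinite, locally finite, connected simple graph, let U : E → [0,1] be injective, and let ε ∈ (0,1). Define ξ := {e ∈ E : 1 − U(e) ≥ (1 − ε)(1 − Z_f(e))}. Then ξ intersects ∂_E W for every set of vertices W with ∅ ≠ W ≠ V; consequently, the spanning subgraph (V, ξ) is connected. (Note ξ ⊇ F_f(U).) -/
open SimpleGraph

open scoped Classical in
/-- `Z_f(e)` as a real number: the infimum over simple paths in `G \ {e}`
connecting the endpoints of `e` of the maximum label along the path, and `1`
if there is no such path. -/
noncomputable def ZfR {V : Type*} (G : SimpleGraph V) (U : Sym2 V → ℝ) (e : Sym2 V) : ℝ :=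
  if ∃ (a b : V) (p : G.Walk a b), e = s(a, b) ∧ p.IsPath ∧ e ∉ p.edges then
    sInf {x : ℝ | ∃ (a b : V) (p : G.Walk a b), e = s(a, b) ∧ p.IsPath ∧ e ∉ p.edges ∧
      x = sSup {y : ℝ | ∃ f ∈ p.edges, y = U f}}
  else 1

/-!
Let `I` be the infimum of the labels on a nonempty cut `∂_E W`. A path in `G \ {e}` joining the
endpoints of a cut edge `e` must itself cross the cut, so `Z_f(e) ≥ I`. If `I < 1`, a cut edge
`e` with `U(e) < I + ε(1 - I)` satisfies `1 - U(e) > (1 - ε)(1 - I) ≥ (1 - ε)(1 - Z_f(e))`; the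
slack `ε` is needed because the infimum over an infinite cut need not be attained. If `I = 1`,
every cut edge has label `1`, so by injectivity the cut is a single edge, which is then a bridge
with `Z_f = 1`.
-/

section Cuts

variable {V : Type*} {G : SimpleGraph V} {W : Set V}

theorem SimpleGraph.Walk.exists_mem_edges_cutEdges {a b : V} (p : G.Walk a b) (ha : a ∈ W)
    (hb : b ∉ W) : ∃ f ∈ p.edges, f ∈ cutEdges G W := by
  obtain ⟨d, hd, hd₁, hd₂⟩ := p.exists_boundary_dart W ha hb
  refine ⟨d.edge, p.edges_eq_map_darts ▸ List.mem_map_of_mem hd, d.edge_mem, d.fst, d.snd, rfl,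
    hd₁, hd₂⟩

theorem SimpleGraph.Walk.exists_mem_edges_cutEdges_of_eq {e : Sym2 V} (he : e ∈ cutEdges G W)
    {a b : V} (hab : e = s(a, b)) (p : G.Walk a b) : ∃ f ∈ p.edges, f ∈ cutEdges G W := by
  obtain ⟨-, x, y, hxy, hx, hy⟩ := he
  rw [hab, Sym2.eq_iff] at hxy
  rcases hxy with ⟨rfl, rfl⟩ | ⟨rfl, rfl⟩
  · exact p.exists_mem_edges_cutEdges hx hy
  · simpa using p.reverse.exists_mem_edges_cutEdges hx hy

theorem cutEdges_nonempty (hG : G.Preconnected) (hW : W.Nonempty) (hW' : W ≠ Set.univ) :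
    (cutEdges G W).Nonempty := by
  obtain ⟨a, ha⟩ := hW
  obtain ⟨b, hb⟩ := (Set.ne_univ_iff_exists_notMem W).mp hW'
  obtain ⟨f, -, hf⟩ := (hG a b).some.exists_mem_edges_cutEdges ha hb
  exact ⟨f, hf⟩

theorem connected_fromEdgeSet_of_forall_cutEdges [Nonempty V] {S : Set (Sym2 V)}
    (hS : ∀ W : Set V, W.Nonempty → W ≠ Set.univ → ∃ e ∈ cutEdges G W, e ∈ S) :
    (fromEdgeSet S).Connected := by
  refine (connected_iff _).mpr ⟨fun u v => ?_, inferInstance⟩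
  by_contra huv
  have hproper : {x | (fromEdgeSet S).Reachable u x} ≠ Set.univ := fun h =>
    huv (Set.eq_univ_iff_forall.mp h v)
  obtain ⟨e, ⟨-, x, y, rfl, hx, hy⟩, heS⟩ := hS _ ⟨u, .refl u⟩ hproper
  have hxy : (fromEdgeSet S).Adj x y := (fromEdgeSet_adj S).mpr ⟨heS, fun h => hy (h ▸ hx)⟩
  exact hy (hx.trans hxy.reachable)

end Cuts

section ZfR

variable {V : Type*} {G : SimpleGraph V} {U : Sym2 V → ℝ} {e : Sym2 V}

theorem SimpleGraph.Walk.le_sSup_labels {a b : V} (p : G.Walk a b) {f : Sym2 V}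
    (hf : f ∈ p.edges) : U f ≤ sSup {y : ℝ | ∃ f ∈ p.edges, y = U f} := by
  refine le_csSup ((p.edges.map U).finite_toSet.subset ?_).bddAbove ⟨f, hf, rfl⟩
  rintro y ⟨g, hg, rfl⟩
  exact List.mem_map_of_mem hg

theorem le_ZfR {c : ℝ} (hc : c ≤ 1)
    (h : ∀ (a b : V) (p : G.Walk a b), e = s(a, b) → p.IsPath → e ∉ p.edges →
      c ≤ sSup {y : ℝ | ∃ f ∈ p.edges, y = U f}) :
    c ≤ ZfR G U e := by
  unfold ZfR
  split_ifs with hpath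
  · obtain ⟨a, b, p, hab, hp, hep⟩ := hpath
    refine le_csInf ⟨_, a, b, p, hab, hp, hep, rfl⟩ ?_
    rintro x ⟨a', b', p', hab', hp', hep', rfl⟩
    exact h a' b' p' hab' hp' hep'
  · exact hc

theorem ZfR_eq_one
    (h : ∀ (a b : V) (p : G.Walk a b), e = s(a, b) → p.IsPath → e ∈ p.edges) :
    ZfR G U e = 1 := by
  unfold ZfR
  rw [if_neg]
  rintro ⟨a, b, p, hab, hp, hep⟩
  exact hep (h a b p hab hp)

theorem le_ZfR_of_mem_cutEdges {W : Set V} {c : ℝ} (hc : c ≤ 1)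
    (hcut : ∀ f ∈ cutEdges G W, c ≤ U f) (he : e ∈ cutEdges G W) : c ≤ ZfR G U e :=
  le_ZfR hc fun _ _ p hab _ _ =>
    let ⟨_, hf, hfW⟩ := p.exists_mem_edges_cutEdges_of_eq he hab
    (hcut _ hfW).trans (p.le_sSup_labels hf)

theorem ZfR_eq_one_of_cutEdges_subsingleton {W : Set V} (hW : (cutEdges G W).Subsingleton)
    (he : e ∈ cutEdges G W) : ZfR G U e = 1 :=
  ZfR_eq_one fun _ _ p hab _ =>
    let ⟨_, hf, hfW⟩ := p.exists_mem_edges_cutEdges_of_eq he hab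
    hW he hfW ▸ hf

theorem exists_mem_cutEdges_one_sub_ZfR_le {W : Set V} (hU : Set.InjOn U G.edgeSet)
    (hU01 : ∀ e ∈ G.edgeSet, U e ∈ Set.Icc (0 : ℝ) 1) {ε : ℝ}
    (hε : ε ∈ Set.Ioo (0 : ℝ) 1)
    (hW : (cutEdges G W).Nonempty) :
    ∃ e ∈ cutEdges G W, (1 - ε) * (1 - ZfR G U e) ≤ 1 - U e := by
  obtain ⟨hε0, hε1⟩ := hε
  by_cases hlt : ∃ f ∈ cutEdges G W, U f < 1
  · obtain ⟨f, hfW, hf1⟩ := hlt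
    have hbdd : BddBelow (U '' cutEdges G W) :=
      ⟨0, Set.forall_mem_image.mpr fun g hg => (hU01 g hg.1).1⟩
    set I := sInf (U '' cutEdges G W)
    have hI : ∀ g ∈ cutEdges G W, I ≤ U g := fun g hg => csInf_le hbdd ⟨g, hg, rfl⟩
    have hI1 : I < 1 := (hI f hfW).trans_lt hf1
    have hslack : 0 < ε * (1 - I) := mul_pos hε0 (sub_pos.mpr hI1)
    obtain ⟨_, ⟨e, heW, rfl⟩, he⟩ :=
      exists_lt_of_csInf_lt (hW.image U) (lt_add_of_pos_right I hslack)
    have hZ : I ≤ ZfR G U e := le_ZfR_of_mem_cutEdges hI1.le hI heW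
    refine ⟨e, heW, ?_⟩
    nlinarith [mul_le_mul_of_nonneg_left hZ (sub_nonneg.mpr hε1.le)]
  · push Not at hlt
    have hlabel : ∀ g ∈ cutEdges G W, U g = 1 := fun g hg =>
      le_antisymm (hU01 g hg.1).2 (hlt g hg)
    have hsub : (cutEdges G W).Subsingleton := fun g hg g' hg' =>
      hU hg.1 hg'.1 ((hlabel g hg).trans (hlabel g' hg').symm)
    obtain ⟨e, heW⟩ := hW
    refine ⟨e, heW, ?_⟩
    rw [ZfR_eq_one_of_cutEdges_subsingleton hsub heW, hlabel e heW]
    simp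

end ZfR

theorem stmt17_general {V : Type*} (G : SimpleGraph V)
    (hG : G.Connected)
    (U : Sym2 V → ℝ) (hU : Set.InjOn U G.edgeSet)
    (hU01 : ∀ e ∈ G.edgeSet, U e ∈ Set.Icc (0 : ℝ) 1)
    (ε : ℝ) (hε : ε ∈ Set.Ioo (0 : ℝ) 1) :
    (∀ W : Set V, W.Nonempty → W ≠ Set.univ →
      ∃ e ∈ cutEdges G W, 1 - U e ≥ (1 - ε) * (1 - ZfR G U e)) ∧
    (SimpleGraph.fromEdgeSet
      {e : Sym2 V | e ∈ G.edgeSet ∧ 1 - U e ≥ (1 - ε) * (1 - ZfR G U e)}).Connected := by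
  have hcut : ∀ W : Set V, W.Nonempty → W ≠ Set.univ →
      ∃ e ∈ cutEdges G W, 1 - U e ≥ (1 - ε) * (1 - ZfR G U e) := fun W hW hW' =>
    exists_mem_cutEdges_one_sub_ZfR_le hU hU01 hε (cutEdges_nonempty hG.preconnected hW hW')
  have := hG.nonempty
  refine ⟨hcut, connected_fromEdgeSet_of_forall_cutEdges (G := G) fun W hW hW' => ?_⟩
  obtain ⟨e, heW, he⟩ := hcut W hW hW'
  exact ⟨e, heW, heW.1, he⟩

/-- For an injective labeling `U : E → [0,1]` of an infinite,
locally finite, connected graph and `ε ∈ (0,1)`, the set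
`ξ = {e : 1 - U(e) ≥ (1-ε)(1 - Z_f(e))}` (which contains the free minimal
spanning forest) meets every nonempty proper cut `∂_E W`; consequently the
spanning subgraph `(V, ξ)` is connected. -/
theorem stmt17 {V : Type*} [Infinite V] (G : SimpleGraph V)
    (hlf : ∀ v : V, (G.neighborSet v).Finite) (hG : G.Connected)
    (U : Sym2 V → ℝ) (hU : Set.InjOn U G.edgeSet)
    (hU01 : ∀ e ∈ G.edgeSet, U e ∈ Set.Icc (0 : ℝ) 1)
    (ε : ℝ) (hε : ε ∈ Set.Ioo (0 : ℝ) 1) :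
    (∀ W : Set V, W.Nonempty → W ≠ Set.univ →
      ∃ e ∈ cutEdges G W, 1 - U e ≥ (1 - ε) * (1 - ZfR G U e)) ∧
    (SimpleGraph.fromEdgeSet
      {e : Sym2 V | e ∈ G.edgeSet ∧ 1 - U e ≥ (1 - ε) * (1 - ZfR G U e)}).Connected :=
  stmt17_general G hG U hU hU01 ε hε
end

section
/- Let G be a finite connected simple graph with vertex set V and edge set E, |E| = m, and let T = {e_1, …, e_n} be a spanning tree of G. Let the edge ordering be given by a uniformly random bijection U : E → {1, …, m}, and let T_U be the associated minimal spanning tree. For F ⊆ E, let N(F) be the number of edges of G whose endpoints lie in distinct connected components of the spanning subgraph (V, F), and for a sequence of edges set N'(f_1, …, f_n) := ∏_{j=0}^{n−1} N({f_1, …, f_j}). Then the probability that T_U = T equals Σ_{σ ∈ S_n} N'(e_{σ(1)}, …, e_{σ(n)})^{−1}, where S_n is the group of permutations of {1, …, n}. -/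
open SimpleGraph

open Finset

lemma count_chain {α : Type*} [Fintype α] [DecidableEq α] {m : ℕ}
    (hm : Fintype.card α = m) (n : ℕ)
    (D : ℕ → Finset α) (d : ℕ → α)
    (hd : ∀ j < n, d j ∈ D j)
    (hmono : ∀ j k, j < k → k < n → D k ⊆ D j)
    (hnot : ∀ j k, j < k → k < n → d j ∉ D k) :
    (Finset.univ.filter
        (fun f : α ≃ Fin m => ∀ j < n, ∀ x ∈ D j, f (d j) ≤ f x)).card
      * ∏ j ∈ Finset.range n, (D j).card = m.factorial := by
  induction n with
  | zero =>
    simp [Fintype.card_equiv (Fintype.equivFinOfCardEq hm), hm]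
  | succ n ih =>
    have hdn : d n ∈ D n := hd n (Nat.lt_succ_self n)
    -- closure lemma : composing with a swap of two elements of D n preserves constraints j < n
    have closure : ∀ (f : α ≃ Fin m) (x : α), x ∈ D n →
        (∀ j < n, ∀ y ∈ D j, f (d j) ≤ f y) →
        (∀ j < n, ∀ y ∈ D j, ((Equiv.swap (d n) x).trans f) (d j)
            ≤ ((Equiv.swap (d n) x).trans f) y) := by
      intro f x hx hf j hj y hy
      have hdj1 : d j ≠ d n := fun h => hnot j n hj (Nat.lt_succ_self n) (h ▸ hdn)
      have hdj2 : d j ≠ x := fun h => hnot j n hj (Nat.lt_succ_self n) (h ▸ hx)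
      have h1 : ((Equiv.swap (d n) x).trans f) (d j) = f (d j) := by
        simp [Equiv.swap_apply_of_ne_of_ne hdj1 hdj2]
      rw [h1]
      have hsw : Equiv.swap (d n) x y ∈ D j := by
        rcases eq_or_ne y (d n) with rfl | h1
        · rw [Equiv.swap_apply_left]
          exact hmono j n hj (Nat.lt_succ_self n) hx
        rcases eq_or_ne y x with rfl | h2
        · rw [Equiv.swap_apply_right]
          exact hmono j n hj (Nat.lt_succ_self n) hdn
        · rw [Equiv.swap_apply_of_ne_of_ne h1 h2]; exact hy
      exact hf j hj _ hsw
    have key : (Finset.univ.filter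
        (fun f : α ≃ Fin m => ∀ j < n + 1, ∀ x ∈ D j, f (d j) ≤ f x)).card
        * (D n).card
        = (Finset.univ.filter
        (fun f : α ≃ Fin m => ∀ j < n, ∀ x ∈ D j, f (d j) ≤ f x)).card := by
      rw [← Finset.card_product]
      -- the argmin of f on D n
      have hex : ∀ f : α ≃ Fin m, ∃ x, x ∈ D n ∧ ∀ y ∈ D n, f x ≤ f y := by
        intro f
        obtain ⟨x, hx, hmin⟩ := Finset.exists_min_image (D n) (fun x => f x) ⟨d n, hdn⟩
        exact ⟨x, hx, hmin⟩
      choose am hamD hammin using hex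
      apply Finset.card_bij'
        (i := fun (p : (α ≃ Fin m) × α) _ => (Equiv.swap (d n) p.2).trans p.1)
        (j := fun f _ => ((Equiv.swap (d n) (am f)).trans f, am f))
      · -- maps into filter_n
        rintro ⟨f, x⟩ hp
        simp only [Finset.mem_product, Finset.mem_filter, Finset.mem_univ, true_and] at hp
        obtain ⟨hf, hx⟩ := hp
        simp only [Finset.mem_filter, Finset.mem_univ, true_and]
        exact closure f x hx (fun j hj => hf j (Nat.lt_succ_of_lt hj))
      · -- maps back into product
        intro f hf
        simp only [Finset.mem_filter, Finset.mem_univ, true_and] at hf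
        simp only [Finset.mem_product, Finset.mem_filter, Finset.mem_univ, true_and]
        refine ⟨?_, hamD f⟩
        intro j hj x hx
        rcases Nat.lt_succ_iff_lt_or_eq.1 hj with hj | hj'
        · exact closure f (am f) (hamD f) (fun j hj => hf j hj) j hj x hx
        · subst hj'
          -- constraint at n (now renamed j)
          have h1 : ((Equiv.swap (d j) (am f)).trans f) (d j) = f (am f) := by
            simp
          rw [h1]
          have hsw : Equiv.swap (d j) (am f) x ∈ D j := by
            rcases eq_or_ne x (d j) with rfl | h1
            · rw [Equiv.swap_apply_left]; exact hamD f
            rcases eq_or_ne x (am f) with rfl | h2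
            · rw [Equiv.swap_apply_right]; exact hdn
            · rw [Equiv.swap_apply_of_ne_of_ne h1 h2]; exact hx
          exact hammin f _ hsw
      · -- left inverse
        rintro ⟨f, x⟩ hp
        simp only [Finset.mem_product, Finset.mem_filter, Finset.mem_univ, true_and] at hp
        obtain ⟨hf, hx⟩ := hp
        set g := (Equiv.swap (d n) x).trans f with hg
        have hamg : am g = x := by
          have hgmin : ∀ y ∈ D n, g x ≤ g y := by
            intro y hy
            have h1 : g x = f (d n) := by simp [hg, Equiv.swap_apply_right]
            rw [h1]
            have hsw : Equiv.swap (d n) x y ∈ D n := by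
              rcases eq_or_ne y (d n) with rfl | h1
              · rw [Equiv.swap_apply_left]; exact hx
              rcases eq_or_ne y x with rfl | h2
              · rw [Equiv.swap_apply_right]; exact hdn
              · rw [Equiv.swap_apply_of_ne_of_ne h1 h2]; exact hy
            exact hf n (Nat.lt_succ_self n) _ hsw
          have heq : g (am g) = g x :=
            le_antisymm (hammin g x hx) (hgmin _ (hamD g))
          exact g.injective heq
        ext1
        · ext y
          simp [hamg, hg, Equiv.swap_apply_self]
          rw [← hg, hamg]; simp
        · simpa using hamg
      · -- right inverse
        intro f hf
        ext y
        simp [Equiv.swap_apply_self]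
    rw [Finset.prod_range_succ, ← mul_assoc, mul_right_comm, key,
      ih (fun j hj => hd j (Nat.lt_succ_of_lt hj))
        (fun j k hjk hk => hmono j k hjk (Nat.lt_succ_of_lt hk))
        (fun j k hjk hk => hnot j k hjk (Nat.lt_succ_of_lt hk))]




section aux

variable {V : Type*} {n : ℕ}

lemma sym2_exists (e : Sym2 V) : ∃ a b, e = s(a, b) := by
  induction e using Sym2.ind with
  | _ a b => exact ⟨a, b, rfl⟩

/-- F-sets -/
def Fst (t : Fin n → Sym2 V) (σ : Equiv.Perm (Fin n)) (j : ℕ) : Set (Sym2 V) :=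
  {f | ∃ i : Fin n, (i : ℕ) < j ∧ f = t (σ i)}

/-- D-sets -/
def Dst (G : SimpleGraph V) (t : Fin n → Sym2 V) (σ : Equiv.Perm (Fin n)) (j : ℕ) :
    Set (Sym2 V) :=
  {e | e ∈ G.edgeSet ∧ ∃ a b : V, e = s(a, b) ∧
    ¬ (SimpleGraph.fromEdgeSet (Fst t σ j)).Reachable a b}

variable {G : SimpleGraph V} {t : Fin n → Sym2 V}

lemma Fst_subset_range (σ : Equiv.Perm (Fin n)) (j : ℕ) : Fst t σ j ⊆ Set.range t := by
  rintro f ⟨i, _, rfl⟩; exact ⟨σ i, rfl⟩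

lemma mem_Fst_iff (ht_inj : Function.Injective t) {σ : Equiv.Perm (Fin n)} {j : ℕ}
    {k : Fin n} : t k ∈ Fst t σ j ↔ (σ.symm k : ℕ) < j := by
  constructor
  · rintro ⟨i, hi, hik⟩
    have : k = σ i := ht_inj hik
    rw [this, Equiv.symm_apply_apply]; exact hi
  · intro h
    exact ⟨σ.symm k, h, by rw [Equiv.apply_symm_apply]⟩

lemma walk_cross (F : Set (Sym2 V)) {a b : V} (w : G.Walk a b)
    (h : ¬ (SimpleGraph.fromEdgeSet F).Reachable a b) :
    ∃ e ∈ w.edges, ∃ x y : V, e = s(x, y) ∧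
      ¬ (SimpleGraph.fromEdgeSet F).Reachable x y := by
  induction w with
  | nil => exact absurd (Reachable.refl _) h
  | @cons u c b hadj w ih =>
    by_cases hc : (SimpleGraph.fromEdgeSet F).Reachable u c
    · have h' : ¬ (SimpleGraph.fromEdgeSet F).Reachable c b := fun hr => h (hc.trans hr)
      obtain ⟨e, he, x, y, hxy, hn⟩ := ih h'
      exact ⟨e, List.mem_cons_of_mem _ he, x, y, hxy, hn⟩
    · exact ⟨s(u, c), List.mem_cons_self, u, c, rfl, hc⟩

/-- walk whose edges all join reachable pairs gives reachability of endpoints -/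
lemma walk_reach (H : SimpleGraph V) {x y : V} (p : G.Walk x y)
    (hp : ∀ f ∈ p.edges, ∀ u v : V, f = s(u, v) → H.Reachable u v) :
    H.Reachable x y := by
  induction p with
  | nil => exact Reachable.refl _
  | @cons u c b hadj w ih =>
    have h1 : H.Reachable u c :=
      hp s(u, c) List.mem_cons_self u c rfl
    exact h1.trans (ih fun f hf => hp f (List.mem_cons_of_mem _ hf))

lemma tree_sep (hT : (SimpleGraph.fromEdgeSet (Set.range t)).IsTree)
    (S : Set (Sym2 V)) (hS : S ⊆ Set.range t) (k : Fin n) (hk : t k ∉ S)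
    {a b : V} (hab : t k = s(a, b)) (hne : a ≠ b) :
    ¬ (SimpleGraph.fromEdgeSet S).Reachable a b := by
  set T := SimpleGraph.fromEdgeSet (Set.range t) with hTdef
  have hadj : T.Adj a b := by
    rw [hTdef, fromEdgeSet_adj]
    exact ⟨hab ▸ ⟨k, rfl⟩, hne⟩
  have hbridge : T.IsBridge s(a, b) :=
    (isAcyclic_iff_forall_edge_isBridge.mp hT.IsAcyclic) (by rwa [mem_edgeSet])
  have hnr : ¬ (T \ SimpleGraph.fromEdgeSet {s(a, b)}).Reachable a b :=
    isBridge_iff.mp hbridge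
  intro hr
  apply hnr
  refine hr.mono ?_
  intro x y hxy
  rw [fromEdgeSet_adj] at hxy
  constructor
  · rw [hTdef, fromEdgeSet_adj]
    exact ⟨hS hxy.1, hxy.2⟩
  · rw [fromEdgeSet_adj]
    rintro ⟨hmem, -⟩
    apply hk
    rw [hab, ← Set.mem_singleton_iff.mp hmem]
    exact hxy.1

lemma ne_of_rep {e : Sym2 V} (he : e ∈ G.edgeSet) {a b : V} (hab : e = s(a, b)) : a ≠ b := by
  subst hab; exact G.ne_of_adj (G.mem_edgeSet.mp he)

lemma mem_Dst_iff {σ : Equiv.Perm (Fin n)} {j : ℕ} {e : Sym2 V} (he : e ∈ G.edgeSet)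
    {a b : V} (hab : e = s(a, b)) :
    e ∈ Dst G t σ j ↔ ¬ (SimpleGraph.fromEdgeSet (Fst t σ j)).Reachable a b := by
  constructor
  · rintro ⟨-, c, d, hcd, hn⟩
    rcases Sym2.eq_iff.mp (hab.symm.trans hcd) with ⟨rfl, rfl⟩ | ⟨rfl, rfl⟩
    · exact hn
    · exact fun hr => hn hr.symm
  · intro hn
    exact ⟨he, a, b, hab, hn⟩

lemma tree_mem_Dst (htE : Set.range t ⊆ G.edgeSet) (hT : (SimpleGraph.fromEdgeSet (Set.range t)).IsTree)
    {σ : Equiv.Perm (Fin n)} {j : ℕ} {k : Fin n} (hk : t k ∉ Fst t σ j) :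
    t k ∈ Dst G t σ j := by
  have he : t k ∈ G.edgeSet := htE ⟨k, rfl⟩
  obtain ⟨a, b, hab⟩ := sym2_exists (t k)
  exact ⟨he, a, b, hab,
    tree_sep hT _ (Fst_subset_range σ j) k hk hab (ne_of_rep he hab)⟩

lemma not_mem_Dst {σ : Equiv.Perm (Fin n)} {j : ℕ} {i : Fin n} (hi : (i : ℕ) < j) :
    t (σ i) ∉ Dst G t σ j := by
  rintro ⟨he, a, b, hab, hn⟩
  apply hn
  have hadj : (SimpleGraph.fromEdgeSet (Fst t σ j)).Adj a b := by
    rw [fromEdgeSet_adj]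
    exact ⟨hab ▸ ⟨i, hi, rfl⟩, ne_of_rep he hab⟩
  exact hadj.reachable

lemma Dst_antitone {σ : Equiv.Perm (Fin n)} {j j' : ℕ} (h : j ≤ j') :
    Dst G t σ j' ⊆ Dst G t σ j := by
  rintro e ⟨he, a, b, hab, hn⟩
  refine ⟨he, a, b, hab, fun hr => hn (hr.mono (fromEdgeSet_mono ?_))⟩
  rintro f ⟨i, hi, rfl⟩
  exact ⟨i, lt_of_lt_of_le hi h, rfl⟩

end aux

section main
variable {V : Type*} {n : ℕ} {G : SimpleGraph V} {t : Fin n → Sym2 V}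

lemma cond_to_mst (htE : Set.range t ⊆ G.edgeSet) (ht_inj : Function.Injective t)
    (hT : (SimpleGraph.fromEdgeSet (Set.range t)).IsTree)
    (U : Sym2 V → ℕ)
    (hUinj : ∀ e ∈ G.edgeSet, ∀ f ∈ G.edgeSet, U e = U f → e = f)
    (σ : Equiv.Perm (Fin n))
    (hcond : ∀ j : Fin n, ∀ e ∈ Dst G t σ (j : ℕ), U (t (σ j)) ≤ U e) :
    mstEdges G U = Set.range t := by
  apply Set.Subset.antisymm
  · -- mstEdges ⊆ range t
    rintro e ⟨heE, hmin⟩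
    by_contra hnot
    obtain ⟨a, b, hab⟩ := sym2_exists e
    have hne : a ≠ b := ne_of_rep heE hab
    classical
    set P : ℕ → Prop := fun j => (SimpleGraph.fromEdgeSet (Fst t σ j)).Reachable a b with hP
    have hPn : P n := by
      have hFn : Fst t σ n = Set.range t := by
        apply Set.Subset.antisymm (Fst_subset_range σ n)
        rintro f ⟨k, rfl⟩
        exact ⟨σ.symm k, (σ.symm k).isLt, by rw [Equiv.apply_symm_apply]⟩
      rw [hP]
      simp only [hFn]
      exact hT.isConnected.preconnected a b
    have hP0 : ¬ P 0 := by
      intro h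
      have h0 : Fst t σ 0 = ∅ := by
        ext f; simp only [Fst, Set.mem_setOf_eq, Set.mem_empty_iff_false, iff_false]
        rintro ⟨i, hi, -⟩; omega
      rw [hP] at h
      simp only [h0, fromEdgeSet_empty, reachable_bot] at h
      exact hne h
    set j₀ := Nat.find ⟨n, hPn⟩ with hj₀def
    have hspec : P j₀ := Nat.find_spec ⟨n, hPn⟩
    have hj₀n : j₀ ≤ n := Nat.find_min' ⟨n, hPn⟩ hPn
    have hj₀pos : 0 < j₀ := Nat.pos_of_ne_zero (fun h => hP0 (h ▸ hspec))
    set j := j₀ - 1 with hjdef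
    have hnP : ¬ P j := Nat.find_min ⟨n, hPn⟩ (by omega)
    have hPj1 : P (j + 1) := by
      have : j + 1 = j₀ := by omega
      rw [this]; exact hspec
    have hjn : j < n := by omega
    set jf : Fin n := ⟨j, hjn⟩ with hjf
    have heD : e ∈ Dst G t σ j := (mem_Dst_iff heE hab).mpr hnP
    have hUde : U (t (σ jf)) ≤ U e := hcond jf e heD
    have hUde' : U (t (σ jf)) < U e := by
      rcases lt_or_eq_of_le hUde with h | h
      · exact h
      · exact absurd ((hUinj _ (htE ⟨σ jf, rfl⟩) _ heE h) ▸ ⟨σ jf, rfl⟩) hnot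
    -- take a walk in F_{j+1}
    obtain ⟨w⟩ := hPj1
    set q := w.bypass with hq
    have hqp : q.IsPath := w.bypass_isPath
    have hsub : ∀ f ∈ q.edges, f ∈ Fst t σ (j + 1) := by
      intro f hf
      have h1 : f ∈ (SimpleGraph.fromEdgeSet (Fst t σ (j + 1))).edgeSet :=
        SimpleGraph.Walk.edges_subset_edgeSet _ (w.edges_bypass_subset hf)
      rw [edgeSet_fromEdgeSet] at h1
      exact h1.1
    have hsubG : ∀ f ∈ q.edges, f ∈ G.edgeSet := fun f hf =>
      htE (Fst_subset_range σ (j + 1) (hsub f hf))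
    set q' := q.transfer G hsubG with hq'
    have hq'path : q'.IsPath := hqp.transfer hsubG
    obtain ⟨f, hf, hUef⟩ := hmin a b hab q' hq'path
    have hf' : f ∈ q.edges := by
      rw [hq'] at hf
      rwa [SimpleGraph.Walk.edges_transfer] at hf
    obtain ⟨i, hi, rfl⟩ := hsub f hf'
    have hUfd : U (t (σ i)) ≤ U (t (σ jf)) := by
      rcases Nat.lt_succ_iff_lt_or_eq.mp hi with hi' | hi'
      · -- i < j
        have hmem : t (σ jf) ∈ Dst G t σ (i : ℕ) := by
          refine tree_mem_Dst htE hT ?_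
          rw [mem_Fst_iff ht_inj]
          simp only [Equiv.symm_apply_apply, hjf]
          omega
        exact hcond i (t (σ jf)) hmem
      · have : i = jf := Fin.ext hi'
        rw [this]
    omega
  · -- range t ⊆ mstEdges
    rintro e ⟨k, rfl⟩
    refine ⟨htE ⟨k, rfl⟩, ?_⟩
    intro a b hab p hp
    set j : Fin n := σ.symm k with hj
    have hnotF : t k ∉ Fst t σ (j : ℕ) := by
      rw [mem_Fst_iff ht_inj]
      omega
    have hD : ¬ (SimpleGraph.fromEdgeSet (Fst t σ (j : ℕ))).Reachable a b :=
      (mem_Dst_iff (htE ⟨k, rfl⟩) hab).mp (tree_mem_Dst htE hT hnotF)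
    obtain ⟨f, hf, x, y, hxy, hn⟩ := walk_cross (Fst t σ (j : ℕ)) p hD
    have hfE : f ∈ G.edgeSet := p.edges_subset_edgeSet hf
    have hfD : f ∈ Dst G t σ (j : ℕ) := ⟨hfE, x, y, hxy, hn⟩
    have := hcond j f hfD
    rw [hj, Equiv.apply_symm_apply] at this
    exact ⟨f, hf, this⟩

lemma mst_to_cond (htE : Set.range t ⊆ G.edgeSet) (ht_inj : Function.Injective t)
    (hT : (SimpleGraph.fromEdgeSet (Set.range t)).IsTree)
    (U : Sym2 V → ℕ)
    (hUinj : ∀ e ∈ G.edgeSet, ∀ f ∈ G.edgeSet, U e = U f → e = f)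
    (hmst : mstEdges G U = Set.range t) :
    ∃ σ : Equiv.Perm (Fin n), ∀ j : Fin n, ∀ e ∈ Dst G t σ (j : ℕ), U (t (σ j)) ≤ U e := by
  classical
  set g : Fin n → ℕ := fun i => U (t i) with hg
  have ginj : Function.Injective g := fun i i' h =>
    ht_inj (hUinj _ (htE ⟨i, rfl⟩) _ (htE ⟨i', rfl⟩) h)
  set σ := Tuple.sort g with hσ
  have hmono : Monotone (g ∘ σ) := Tuple.monotone_sort g
  have hstrict : StrictMono (g ∘ σ) :=
    hmono.strictMono_of_injective (ginj.comp σ.injective)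
  -- Claim C
  have claimC : ∀ N : ℕ, ∀ e ∈ G.edgeSet, U e = N → ∀ a b : V, e = s(a, b) →
      (SimpleGraph.fromEdgeSet {g' | g' ∈ Set.range t ∧ U g' ≤ U e}).Reachable a b := by
    intro N
    induction N using Nat.strong_induction_on with
    | _ N IH =>
      intro e heE heN a b hab
      by_cases het : e ∈ Set.range t
      · refine SimpleGraph.Adj.reachable ?_
        rw [fromEdgeSet_adj]
        exact ⟨by rw [← hab]; exact ⟨het, le_refl _⟩, ne_of_rep heE hab⟩
      · have hnm : e ∉ mstEdges G U := by rw [hmst]; exact het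
        simp only [mstEdges, Set.mem_setOf_eq, not_and, not_forall] at hnm
        obtain ⟨a', b', hab', p, hp, hlt⟩ := hnm heE
        have hlt' : ∀ f ∈ p.edges, U f < U e := by
          push_neg at hlt
          exact hlt
        have hr : (SimpleGraph.fromEdgeSet
            {g' | g' ∈ Set.range t ∧ U g' ≤ U e}).Reachable a' b' := by
          refine walk_reach _ p ?_
          intro f hf u v huv
          have hfE : f ∈ G.edgeSet := p.edges_subset_edgeSet hf
          have hUf : U f < N := heN ▸ hlt' f hf
          have h1 := IH (U f) hUf f hfE rfl u v huv
          refine h1.mono (fromEdgeSet_mono ?_)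
          rintro x ⟨hx1, hx2⟩
          exact ⟨hx1, le_trans hx2 (le_of_lt (hlt' f hf))⟩
        rcases Sym2.eq_iff.mp (hab.symm.trans hab') with ⟨rfl, rfl⟩ | ⟨rfl, rfl⟩
        · exact hr
        · exact hr.symm
  refine ⟨σ, ?_⟩
  rintro j e ⟨heE, a, b, hab, hnreach⟩
  by_contra hcon
  push_neg at hcon
  have hreach := claimC (U e) e heE rfl a b hab
  apply hnreach
  refine hreach.mono (fromEdgeSet_mono ?_)
  rintro x ⟨⟨k, rfl⟩, hUx⟩
  set i : Fin n := σ.symm k with hi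
  have hik : t (σ i) = t k := by rw [hi, Equiv.apply_symm_apply]
  have hlt2 : g (σ i) < g (σ j) := by
    rw [hg]
    simp only [hik]
    exact lt_of_le_of_lt hUx hcon
  have hij : i < j := by
    by_contra hc
    push_neg at hc
    exact absurd (hmono hc) (not_le_of_gt hlt2)
  exact ⟨i, hij, hik.symm⟩

lemma cond_unique (htE : Set.range t ⊆ G.edgeSet) (ht_inj : Function.Injective t)
    (hT : (SimpleGraph.fromEdgeSet (Set.range t)).IsTree)
    (U : Sym2 V → ℕ)
    (hUinj : ∀ e ∈ G.edgeSet, ∀ f ∈ G.edgeSet, U e = U f → e = f)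
    (σ σ' : Equiv.Perm (Fin n))
    (hcond : ∀ j : Fin n, ∀ e ∈ Dst G t σ (j : ℕ), U (t (σ j)) ≤ U e)
    (hcond' : ∀ j : Fin n, ∀ e ∈ Dst G t σ' (j : ℕ), U (t (σ' j)) ≤ U e) :
    σ = σ' := by
  set g : Fin n → ℕ := fun i => U (t i) with hg
  have ginj : Function.Injective g := fun i i' h =>
    ht_inj (hUinj _ (htE ⟨i, rfl⟩) _ (htE ⟨i', rfl⟩) h)
  have key : ∀ τ : Equiv.Perm (Fin n),
      (∀ j : Fin n, ∀ e ∈ Dst G t τ (j : ℕ), U (t (τ j)) ≤ U e) → τ = Tuple.sort g := by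
    intro τ hc
    rw [Tuple.eq_sort_iff]
    constructor
    · intro i j hij
      rcases lt_or_eq_of_le hij with h | h
      · have hmem : t (τ j) ∈ Dst G t τ (i : ℕ) := by
          refine tree_mem_Dst htE hT ?_
          rw [mem_Fst_iff ht_inj]
          simp only [Equiv.symm_apply_apply]
          exact not_lt_of_ge (le_of_lt h)
        exact hc i (t (τ j)) hmem
      · rw [h]
    · intro i j hij heq
      exact absurd (τ.injective (ginj heq)) (ne_of_lt hij)
  rw [key σ hcond, key σ' hcond']

end main

set_option maxHeartbeats 1000000 in
/-- For a finite connected simple graph `G` with `m` edges, a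
spanning tree `T = {e_1, …, e_n}` (enumerated by an injection `t : Fin n → Sym2 V`),
and a uniformly random bijective labeling of the edges by `{1, …, m}`, the
probability that the minimal spanning tree equals `T` is
`∑_{σ ∈ S_n} N'(e_{σ(1)}, …, e_{σ(n)})⁻¹`, where
`N'(f_1, …, f_n) = ∏_{j=0}^{n-1} N({f_1, …, f_j})` and `N(F)` is the number of
edges of `G` whose endpoints lie in distinct components of `(V, F)`. -/
theorem stmt19 {V : Type*} [Fintype V] [DecidableEq V] (G : SimpleGraph V)
    [DecidableRel G.Adj] (hG : G.Connected)
    (n : ℕ) (t : Fin n → Sym2 V) (ht_inj : Function.Injective t)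
    (htE : Set.range t ⊆ G.edgeSet)
    (hT : (SimpleGraph.fromEdgeSet (Set.range t)).IsTree) :
    ({σ : ↥G.edgeSet ≃ Fin G.edgeFinset.card |
        mstEdges G (fun f => if h : f ∈ G.edgeSet then ((σ ⟨f, h⟩ : Fin _) : ℕ) + 1 else 0)
          = Set.range t}.ncard : ℚ) / (Nat.factorial G.edgeFinset.card) =
      ∑ σ : Equiv.Perm (Fin n),
        (∏ j ∈ Finset.range n,
          ({e : Sym2 V | e ∈ G.edgeSet ∧ ∃ a b : V, e = s(a, b) ∧
            ¬ (SimpleGraph.fromEdgeSet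
                {f : Sym2 V | ∃ i : Fin n, (i : ℕ) < j ∧ f = t (σ i)}).Reachable a b}.ncard
            : ℚ))⁻¹ := by
  classical
  by_cases hn0 : n = 0
  · -- degenerate case: n = 0, the tree is empty and V is a singleton
    subst hn0
    have hrange : Set.range t = ∅ := Set.range_eq_empty t
    have hVsub : Subsingleton V := by
      rw [hrange, SimpleGraph.fromEdgeSet_empty] at hT
      exact ⟨fun a b => SimpleGraph.reachable_bot.mp (hT.isConnected.preconnected a b)⟩
    have hE0 : G.edgeSet = ∅ := by
      ext e
      simp only [Set.mem_empty_iff_false, iff_false]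
      intro he
      obtain ⟨a, b, hab⟩ := sym2_exists e
      exact (ne_of_rep he hab) (Subsingleton.elim a b)
    have hm0 : G.edgeFinset.card = 0 := by
      simp [SimpleGraph.edgeFinset, hE0]
    have hempty : IsEmpty ↥G.edgeSet := Set.isEmpty_coe_sort.mpr hE0
    have hset : {σ : ↥G.edgeSet ≃ Fin G.edgeFinset.card |
        mstEdges G (fun f => if h : f ∈ G.edgeSet then ((σ ⟨f, h⟩ : Fin _) : ℕ) + 1 else 0)
          = Set.range t} = Set.univ := by
      ext f
      simp only [Set.mem_setOf_eq, Set.mem_univ, iff_true, hrange]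
      ext e
      simp only [Set.mem_empty_iff_false, iff_false]
      intro he
      exact (hE0 ▸ he.1 : e ∈ (∅ : Set (Sym2 V)))
    rw [hset, Set.ncard_univ]
    have hcard : Nat.card (↥G.edgeSet ≃ Fin G.edgeFinset.card) = 1 := by
      haveI : IsEmpty (Fin G.edgeFinset.card) := by rw [hm0]; exact Fin.isEmpty
      rw [Nat.card_eq_fintype_card, Fintype.card_equiv (Equiv.equivOfIsEmpty _ _)]
      simp [Fintype.card_eq_zero]
    rw [hcard, hm0]
    simp
  have hnpos : 0 < n := Nat.pos_of_ne_zero hn0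
  set m := G.edgeFinset.card with hmdef
  have hm : Fintype.card ↥G.edgeSet = m := (Set.toFinset_card _).symm
  -- abbreviation for the labeling
  have hUinj : ∀ f : ↥G.edgeSet ≃ Fin m, ∀ e ∈ G.edgeSet, ∀ e' ∈ G.edgeSet,
      (if h : e ∈ G.edgeSet then ((f ⟨e, h⟩ : Fin m) : ℕ) + 1 else 0)
        = (if h : e' ∈ G.edgeSet then ((f ⟨e', h⟩ : Fin m) : ℕ) + 1 else 0) → e = e' := by
    intro f e he e' he' h
    rw [dif_pos he, dif_pos he'] at h
    have h2 : f ⟨e, he⟩ = f ⟨e', he'⟩ := Fin.ext (by omega)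
    have h3 := f.injective h2
    exact congrArg Subtype.val h3
  -- the chain data
  set d : Equiv.Perm (Fin n) → ℕ → ↥G.edgeSet := fun σ j =>
    if h : j < n then ⟨t (σ ⟨j, h⟩), htE ⟨_, rfl⟩⟩ else ⟨t (σ ⟨0, hnpos⟩), htE ⟨_, rfl⟩⟩
    with hddef
  set D : Equiv.Perm (Fin n) → ℕ → Finset ↥G.edgeSet := fun σ j =>
    Finset.univ.filter (fun x => (x : Sym2 V) ∈ Dst G t σ j) with hDdef
  set E : Equiv.Perm (Fin n) → Finset (↥G.edgeSet ≃ Fin m) := fun σ =>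
    Finset.univ.filter (fun f => ∀ j < n, ∀ x ∈ D σ j, f (d σ j) ≤ f x) with hEdef
  -- membership in E σ is the minimality condition
  have hbridge : ∀ (σ : Equiv.Perm (Fin n)) (f : ↥G.edgeSet ≃ Fin m), f ∈ E σ ↔
      (∀ j : Fin n, ∀ e ∈ Dst G t σ (j : ℕ),
        (if h : t (σ j) ∈ G.edgeSet then ((f ⟨t (σ j), h⟩ : Fin m) : ℕ) + 1 else 0)
          ≤ (if h : e ∈ G.edgeSet then ((f ⟨e, h⟩ : Fin m) : ℕ) + 1 else 0)) := by
    intro σ f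
    rw [hEdef]
    simp only [Finset.mem_filter, Finset.mem_univ, true_and]
    constructor
    · intro h j e heD
      have heE : e ∈ G.edgeSet := heD.1
      have htjE : t (σ j) ∈ G.edgeSet := htE ⟨σ j, rfl⟩
      rw [dif_pos htjE, dif_pos heE]
      have hx : (⟨e, heE⟩ : ↥G.edgeSet) ∈ D σ (j : ℕ) := by
        rw [hDdef]
        simp only [Finset.mem_filter, Finset.mem_univ, true_and]
        exact heD
      have h1 := h (j : ℕ) j.isLt _ hx
      have h2 : d σ (j : ℕ) = ⟨t (σ j), htjE⟩ := by
        rw [hddef]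
        simp only [dif_pos j.isLt, Fin.eta]
      rw [h2] at h1
      exact Nat.add_le_add_right (Fin.le_def.mp h1) 1
    · intro h j hj x hx
      have hxD : (x : Sym2 V) ∈ Dst G t σ j := by
        rw [hDdef] at hx
        simpa using hx
      have h1 := h ⟨j, hj⟩ (x : Sym2 V) hxD
      have htjE : t (σ ⟨j, hj⟩) ∈ G.edgeSet := htE ⟨σ ⟨j, hj⟩, rfl⟩
      rw [dif_pos htjE, dif_pos x.2] at h1
      have h2 : d σ j = ⟨t (σ ⟨j, hj⟩), htjE⟩ := by
        rw [hddef]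
        simp only [dif_pos hj]
      rw [h2]
      have h3 : (⟨(x : Sym2 V), x.2⟩ : ↥G.edgeSet) = x := Subtype.ext rfl
      rw [h3] at h1
      exact Fin.le_def.mpr (by omega)
  -- the event decomposes as a disjoint union
  have hdecomp : {σ' : ↥G.edgeSet ≃ Fin m |
      mstEdges G (fun f => if h : f ∈ G.edgeSet then ((σ' ⟨f, h⟩ : Fin m) : ℕ) + 1 else 0)
        = Set.range t} = ↑((Finset.univ : Finset (Equiv.Perm (Fin n))).biUnion E) := by
    ext f
    simp only [Set.mem_setOf_eq, Finset.coe_biUnion, Finset.coe_univ, Set.mem_iUnion,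
      Finset.mem_coe, Set.mem_univ, Set.iUnion_true]
    constructor
    · intro hmst
      obtain ⟨σ, hcond⟩ := mst_to_cond htE ht_inj hT _ (hUinj f) hmst
      exact ⟨σ, (hbridge σ f).mpr hcond⟩
    · rintro ⟨σ, hf⟩
      exact cond_to_mst htE ht_inj hT _ (hUinj f) σ ((hbridge σ f).mp hf)
  have hdisj : ∀ σ ∈ (Finset.univ : Finset (Equiv.Perm (Fin n))),
      ∀ σ' ∈ (Finset.univ : Finset (Equiv.Perm (Fin n))), σ ≠ σ' →
      Disjoint (E σ) (E σ') := by
    intro σ _ σ' _ hne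
    rw [Finset.disjoint_left]
    intro f hf hf'
    exact hne (cond_unique htE ht_inj hT _ (hUinj f) σ σ'
      ((hbridge σ f).mp hf) ((hbridge σ' f).mp hf'))
  have hdD : ∀ (σ : Equiv.Perm (Fin n)), ∀ j < n, d σ j ∈ D σ j := by
    intro σ j hj
    rw [hddef, hDdef]
    simp only [dif_pos hj, Finset.mem_filter, Finset.mem_univ, true_and]
    refine tree_mem_Dst htE hT ?_
    rw [mem_Fst_iff ht_inj]
    simp only [Equiv.symm_apply_apply]
    omega
  have hcount : ∀ σ : Equiv.Perm (Fin n),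
      (E σ).card * ∏ j ∈ Finset.range n, (D σ j).card = m.factorial := by
    intro σ
    rw [hEdef]
    refine count_chain hm n (D σ) (d σ) (hdD σ) ?_ ?_
    · intro j k hjk hk
      rw [hDdef]
      intro x hx
      simp only [Finset.mem_filter, Finset.mem_univ, true_and] at hx ⊢
      exact Dst_antitone (le_of_lt hjk) hx
    · intro j k hjk hk
      rw [hddef, hDdef]
      simp only [dif_pos (lt_trans hjk hk), Finset.mem_filter, Finset.mem_univ, true_and]
      exact not_mem_Dst (show ((⟨j, lt_trans hjk hk⟩ : Fin n) : ℕ) < k by simpa using hjk)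
  have hNcard : ∀ (σ : Equiv.Perm (Fin n)) (j : ℕ), (Dst G t σ j).ncard = (D σ j).card := by
    intro σ j
    have h1 : {x : ↥G.edgeSet | (x : Sym2 V) ∈ Dst G t σ j} = ↑(D σ j) := by
      rw [hDdef]
      ext x
      simp
    have h2 : Dst G t σ j = Subtype.val '' {x : ↥G.edgeSet | (x : Sym2 V) ∈ Dst G t σ j} := by
      ext e
      constructor
      · intro he
        exact ⟨⟨e, he.1⟩, he, rfl⟩
      · rintro ⟨x, hx, rfl⟩
        exact hx
    rw [h2, Set.ncard_image_of_injective _ Subtype.val_injective, h1, Set.ncard_coe_finset]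
  have hNpos : ∀ (σ : Equiv.Perm (Fin n)), ∀ j < n, 0 < (D σ j).card := by
    intro σ j hj
    exact Finset.card_pos.mpr ⟨d σ j, hdD σ j hj⟩
  rw [hdecomp, Set.ncard_coe_finset, Finset.card_biUnion hdisj]
  rw [Nat.cast_sum, Finset.sum_div]
  apply Finset.sum_congr rfl
  intro σ _
  show ((E σ).card : ℚ) / (m.factorial : ℚ)
      = (∏ j ∈ Finset.range n, ((Dst G t σ j).ncard : ℚ))⁻¹
  have hprod_pos : (0 : ℚ) < ∏ j ∈ Finset.range n, ((Dst G t σ j).ncard : ℚ) := by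
    apply Finset.prod_pos
    intro j hj
    rw [hNcard σ j]
    exact_mod_cast hNpos σ j (Finset.mem_range.mp hj)
  have hkey : ((E σ).card : ℚ) * ∏ j ∈ Finset.range n, ((Dst G t σ j).ncard : ℚ)
      = (m.factorial : ℚ) := by
    have := hcount σ
    push_cast [hNcard]
    exact_mod_cast congrArg (Nat.cast : ℕ → ℚ) this
  rw [div_eq_iff (by positivity : (m.factorial : ℚ) ≠ 0)]
  rw [← hkey]
  field_simp
end
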